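/- arXiv:math/0408164 — 7 statements merged into one kernel-verified Lean document; each statement's English description precedes it below -/
import Mathlib

section
/- Let M be a finite-dimensional module over a finite-dimensional K-algebra such that head(M) ≅ soc(M), and let N₁, …, N_k be pairwise nonisomorphic simple modules each occurring with composition multiplicity exactly 1 in M. Then either M ≅ N₁ ⊕ ⋯ ⊕ N_k, or there exists a simple module N not isomorphic to any of N₁, …, N_k with Hom(M, N) ≠ 0. -/
/-!
If some simple quotient of `M` is not one of the `Nᵢ`, it is the required `N`. Otherwise every
simple quotient of `M` is some `Nᵢ`, and `rad M = 0`: an atom `T ≤ rad M` lies in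
`soc M ≅ head M`, hence is also a simple quotient `M ⧸ P` with `T ≤ rad M ≤ P`, and a composition
series through `⊥ ⋖ T ≤ P ⋖ ⊤` would contain the factor `T ≅ M ⧸ P ≅ Nᵢ` twice. So `M` is
semisimple, `M ≅ ⨁ⱼ Sⱼ` with `Sⱼ` simple, each `Sⱼ ≅ N_{σ j}`; multiplicity one makes `σ`
injective (two isomorphic summands give the same forbidden configuration) and surjective
(each `Nᵢ` is a quotient of the semisimple `M`, hence of some `Sⱼ` by Schur).
-/

open scoped Classical

universe u

/-- The `j`-th composition factor of a composition series `s` of submodules of `M` is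
isomorphic to `N`. -/
def FactorIso (R : Type u) [Ring R] {M : Type u} [AddCommGroup M] [Module R M]
    (s : CompositionSeries (Submodule R M)) (j : Fin s.length)
    (N : Type u) [AddCommGroup N] [Module R N] : Prop :=
  Nonempty ((↥(s j.succ) ⧸ Submodule.comap (s j.succ).subtype (s j.castSucc)) ≃ₗ[R] N)

namespace CompositionSeries

variable {R : Type u} [Ring R] {M : Type u} [AddCommGroup M] [Module R M]

theorem exists_head_last_of_le [IsNoetherian R M] [IsArtinian R M] {A B : Submodule R M}
    (hAB : A ≤ B) : ∃ s : CompositionSeries (Submodule R M), s.head = A ∧ s.last = B := by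
  obtain ⟨f, f0, n, fn, hf⟩ := exists_covBy_seq_of_wellFoundedLT_wellFoundedGT_of_le hAB
  exact ⟨⟨n, fun i ↦ f i, fun i ↦ hf i i.2⟩, f0, fn⟩

theorem factorIso_self_of_castSucc_eq_bot (s : CompositionSeries (Submodule R M))
    {j : Fin s.length} (h : s j.castSucc = ⊥) : FactorIso R s j (s j.succ) :=
  ⟨Submodule.quotEquivOfEqBot _ (by rw [h, Submodule.comap_bot, Submodule.ker_subtype])⟩

theorem factorIso_quotient_of_succ_eq_top (s : CompositionSeries (Submodule R M))
    {j : Fin s.length} (h : s j.succ = ⊤) : FactorIso R s j (M ⧸ s j.castSucc) := by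
  unfold FactorIso
  rw [h]
  exact ⟨Submodule.Quotient.equiv _ _ Submodule.topEquiv (by ext x; simp)⟩

theorem exists_factorIso_atom_and_factorIso_coatom [IsNoetherian R M] [IsArtinian R M]
    {T Q : Submodule R M} (hT : IsAtom T) (hQ : IsCoatom Q) (hTQ : T ≤ Q) :
    ∃ s : CompositionSeries (Submodule R M), s.head = ⊥ ∧ s.last = ⊤ ∧
      ∃ j₀ j₁ : Fin s.length, j₀ ≠ j₁ ∧ FactorIso R s j₀ T ∧ FactorIso R s j₁ (M ⧸ Q) := by
  obtain ⟨t, rfl, rfl⟩ := exists_head_last_of_le hTQ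
  let s := (t.cons ⊥ hT.bot_covBy).snoc ⊤ (by rw [RelSeries.last_cons]; exact hQ.covBy_top)
  let j₀ : Fin s.length := ⟨0, by simp [s]⟩
  let j₁ : Fin s.length := ⟨t.length + 1, by simp [s]⟩
  have h₀ : s j₀.castSucc = ⊥ := rfl
  have h₀' : s j₀.succ = t.head := rfl
  have h₁ : s j₁.castSucc = t.last := by
    rw [show j₁.castSucc = (Fin.last (t.cons ⊥ hT.bot_covBy).length).castSucc from
      Fin.ext (by simp [j₁])]
    exact (RelSeries.snoc_castSucc ..).trans (RelSeries.last_cons ..)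
  have h₁' : s j₁.succ = ⊤ := by
    rw [show j₁.succ = Fin.last _ from Fin.ext (by simp [j₁, s])]
    exact RelSeries.last_snoc ..
  refine ⟨s, rfl, RelSeries.last_snoc .., j₀, j₁, by simp [j₀, j₁, Fin.ext_iff], ?_, ?_⟩
  · exact h₀' ▸ factorIso_self_of_castSucc_eq_bot s h₀
  · exact h₁ ▸ factorIso_quotient_of_succ_eq_top s h₁'

end CompositionSeries

def MultiplicityOne (R : Type u) [Ring R] (M : Type u) [AddCommGroup M] [Module R M]
    (N : Type u) [AddCommGroup N] [Module R N] : Prop :=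
  ∀ s : CompositionSeries (Submodule R M), s.head = ⊥ → s.last = ⊤ →
    (Finset.univ.filter fun j : Fin s.length => FactorIso R s j N).card = 1

namespace MultiplicityOne

variable {R : Type u} [Ring R] {M : Type u} [AddCommGroup M] [Module R M]
  {N : Type u} [AddCommGroup N] [Module R N]

theorem exists_factorIso [IsNoetherian R M] [IsArtinian R M] (hN : MultiplicityOne R M N) :
    ∃ s : CompositionSeries (Submodule R M), ∃ j, FactorIso R s j N := by
  obtain ⟨s, hs₀, hs₁⟩ := exists_compositionSeries_of_isNoetherian_isArtinian R M
  obtain ⟨j, hj⟩ := Finset.card_eq_one.mp (hN s hs₀ hs₁)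
  have hmem : j ∈ Finset.univ.filter fun j : Fin s.length => FactorIso R s j N := by
    rw [hj]; exact Finset.mem_singleton_self j
  exact ⟨s, j, (Finset.mem_filter.mp hmem).2⟩

theorem not_atom_le_coatom [IsNoetherian R M] [IsArtinian R M] (hN : MultiplicityOne R M N)
    {T Q : Submodule R M} (hT : IsAtom T) (hQ : IsCoatom Q) (hTQ : T ≤ Q)
    (eT : T ≃ₗ[R] N) (eQ : (M ⧸ Q) ≃ₗ[R] N) : False := by
  obtain ⟨s, hs₀, hs₁, j₀, j₁, hne, ⟨f₀⟩, ⟨f₁⟩⟩ :=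
    CompositionSeries.exists_factorIso_atom_and_factorIso_coatom hT hQ hTQ
  have h₂ : 1 < (Finset.univ.filter fun j : Fin s.length => FactorIso R s j N).card :=
    Finset.one_lt_card.mpr ⟨j₀, by simpa using ⟨f₀.trans eT⟩, j₁, by simpa using ⟨f₁.trans eQ⟩, hne⟩
  exact h₂.ne' (hN s hs₀ hs₁)

end MultiplicityOne

section Socle

variable {R : Type u} [Ring R] {M : Type u} [AddCommGroup M] [Module R M]

theorem isSemisimpleModule_sSup_atoms :
    IsSemisimpleModule R (sSup {P : Submodule R M | IsAtom P} : Submodule R M) := by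
  rw [sSup_eq_iSup]
  exact isSemisimpleModule_biSup_of_isSemisimpleModule_submodule fun P hP ↦
    have := isSimpleModule_iff_isAtom.mpr hP; inferInstance

theorem IsSemisimpleModule.exists_surjective_onto_submodule [IsSemisimpleModule R M]
    (p : Submodule R M) : ∃ f : M →ₗ[R] p, Function.Surjective f :=
  have ⟨q, hpq⟩ := exists_isCompl p
  ⟨p.projectionOnto q hpq, fun x ↦ ⟨x, Submodule.projectionOnto_apply_left hpq x⟩⟩

theorem exists_isCoatom_quotient_equiv_of_isAtom
    (φ : (M ⧸ sInf {P : Submodule R M | IsCoatom P}) ≃ₗ[R]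
      (sSup {P : Submodule R M | IsAtom P} : Submodule R M))
    {T : Submodule R M} (hT : IsAtom T) :
    ∃ P : Submodule R M, IsCoatom P ∧ Nonempty ((M ⧸ P) ≃ₗ[R] T) := by
  set S := sSup {P : Submodule R M | IsAtom P}
  have := isSemisimpleModule_sSup_atoms (R := R) (M := M)
  have := isSimpleModule_iff_isAtom.mpr hT
  obtain ⟨π, hπ⟩ := IsSemisimpleModule.exists_surjective_onto_submodule (T.comap S.subtype)
  let g : M →ₗ[R] T := (Submodule.comapSubtypeEquivOfLe (le_sSup hT)).toLinearMap ∘ₗ π ∘ₗ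
    φ.toLinearMap ∘ₗ Submodule.mkQ _
  have hg : Function.Surjective g := by
    simp only [g, LinearMap.coe_comp]
    exact (LinearEquiv.surjective _).comp (hπ.comp (φ.surjective.comp (Submodule.mkQ_surjective _)))
  exact ⟨LinearMap.ker g, LinearMap.isCoatom_ker_of_surjective hg,
    ⟨g.quotKerEquivOfSurjective hg⟩⟩

end Socle

section Radical

variable {R : Type u} [Ring R] {M : Type u} [AddCommGroup M] [Module R M]
  [IsNoetherian R M] [IsArtinian R M]

theorem sInf_isCoatom_eq_bot_of_multiplicityOne {ι : Type*} {N : ι → ModuleCat.{u} R}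
    (hmult : ∀ i, MultiplicityOne R M (N i))
    (hquot : ∀ P : Submodule R M, IsCoatom P → ∃ i, Nonempty ((M ⧸ P) ≃ₗ[R] N i))
    (φ : (M ⧸ sInf {P : Submodule R M | IsCoatom P}) ≃ₗ[R]
      (sSup {P : Submodule R M | IsAtom P} : Submodule R M)) :
    sInf {P : Submodule R M | IsCoatom P} = ⊥ := by
  by_contra hne
  obtain ⟨T, hT, hTJ⟩ := (eq_bot_or_exists_atom_le _).resolve_left hne
  obtain ⟨P, hP, ⟨eT⟩⟩ := exists_isCoatom_quotient_equiv_of_isAtom φ hT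
  obtain ⟨i, ⟨eP⟩⟩ := hquot P hP
  exact (hmult i).not_atom_le_coatom hT hP (hTJ.trans (sInf_le hP)) (eT.symm.trans eP) eP

end Radical

section DirectSum

open DirectSum

variable {R : Type u} [Ring R] {M : Type u} [AddCommGroup M] [Module R M]
  {κ : Type*} {S : κ → Type u} [∀ j, AddCommGroup (S j)] [∀ j, Module R (S j)]

theorem surjective_component_comp_linearEquiv (e : M ≃ₗ[R] ⨁ j, S j) (j : κ) :
    Function.Surjective (component R κ S j ∘ₗ e.toLinearMap) :=
  fun x ↦ ⟨e.symm (lof R κ S j x), by simp⟩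

theorem MultiplicityOne.eq_of_summand_equiv [IsNoetherian R M] [IsArtinian R M]
    {N : Type u} [AddCommGroup N] [Module R N] (hN : MultiplicityOne R M N)
    (e : M ≃ₗ[R] ⨁ j, S j) {a b : κ} [IsSimpleModule R (S a)] [IsSimpleModule R (S b)]
    (ea : S a ≃ₗ[R] N) (eb : S b ≃ₗ[R] N) : a = b := by
  by_contra hne
  let ι := e.symm.toLinearMap ∘ₗ lof R κ S a
  have hι : Function.Injective ι := e.symm.injective.comp (of_injective (β := S) a)
  let eT := LinearEquiv.ofInjective ι hι
  have hT : IsAtom (LinearMap.range ι) :=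
    isSimpleModule_iff_isAtom.mp (IsSimpleModule.congr eT.symm)
  have hp := surjective_component_comp_linearEquiv e b
  refine hN.not_atom_le_coatom hT (LinearMap.isCoatom_ker_of_surjective hp) ?_
    (eT.symm.trans ea) ((LinearMap.quotKerEquivOfSurjective _ hp).trans eb)
  rintro _ ⟨x, rfl⟩
  simpa [ι, component.of] using fun h ↦ absurd h hne

theorem MultiplicityOne.exists_summand_equiv [IsNoetherian R M] [IsArtinian R M]
    [IsSemisimpleModule R M] {N : Type u} [AddCommGroup N] [Module R N] [IsSimpleModule R N]
    (hN : MultiplicityOne R M N) (e : M ≃ₗ[R] ⨁ j, S j) [∀ j, IsSimpleModule R (S j)] :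
    ∃ j, Nonempty (S j ≃ₗ[R] N) := by
  obtain ⟨s, j, ⟨f⟩⟩ := hN.exists_factorIso
  obtain ⟨π, hπ⟩ := IsSemisimpleModule.exists_surjective_onto_submodule (s j.succ)
  let g : M →ₗ[R] N := f.toLinearMap ∘ₗ Submodule.mkQ _ ∘ₗ π
  have := IsSimpleModule.nontrivial R N
  have hg : g ≠ 0 := LinearMap.ne_zero_of_surjective <|
    f.surjective.comp ((Submodule.mkQ_surjective _).comp hπ)
  obtain ⟨j, hj⟩ : ∃ j, g ∘ₗ e.symm.toLinearMap ∘ₗ lof R κ S j ≠ 0 := by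
    by_contra! h
    have : g ∘ₗ e.symm.toLinearMap = 0 :=
      linearMap_ext R fun j ↦ by simpa [LinearMap.comp_assoc] using h j
    exact hg (by simpa [LinearMap.comp_assoc] using congrArg (· ∘ₗ e.toLinearMap) this)
  exact ⟨j, ⟨.ofBijective _ (LinearMap.bijective_of_ne_zero hj)⟩⟩

theorem IsSemisimpleModule.nonempty_linearEquiv_directSum_of_multiplicityOne
    [IsSemisimpleModule R M] [IsNoetherian R M] [IsArtinian R M]
    {ι : Type*} {N : ι → ModuleCat.{u} R} [∀ i, IsSimpleModule R (N i)]
    (hpair : ∀ i j, i ≠ j → IsEmpty ((N i : Type u) ≃ₗ[R] (N j : Type u)))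
    (hmult : ∀ i, MultiplicityOne R M (N i))
    (hquot : ∀ P : Submodule R M, IsCoatom P → ∃ i, Nonempty ((M ⧸ P) ≃ₗ[R] N i)) :
    Nonempty (M ≃ₗ[R] ⨁ i, (N i : Type u)) := by
  obtain ⟨n, S, e, hS⟩ := IsSemisimpleModule.exists_linearEquiv_fin_dfinsupp R M
  have hσ (j : Fin n) : ∃ i, Nonempty (S j ≃ₗ[R] N i) := by
    have hp := surjective_component_comp_linearEquiv (S := fun j ↦ S j) e j
    obtain ⟨i, ⟨eP⟩⟩ := hquot _ (LinearMap.isCoatom_ker_of_surjective hp)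
    exact ⟨i, ⟨(LinearMap.quotKerEquivOfSurjective _ hp).symm.trans eP⟩⟩
  choose σ hσ using hσ
  have hinj : Function.Injective σ := fun a b hab ↦
    (hmult (σ a)).eq_of_summand_equiv (S := fun j ↦ S j) e (hσ a).some (hab ▸ (hσ b).some)
  have hsurj : Function.Surjective σ := fun i ↦ by
    obtain ⟨j, ⟨f⟩⟩ := (hmult i).exists_summand_equiv (S := fun j ↦ S j) e
    exact ⟨j, by_contra fun hne ↦ (hpair _ _ hne).false ((hσ j).some.symm.trans f)⟩
  let σe := Equiv.ofBijective σ ⟨hinj, hsurj⟩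
  have hσe (i : ι) : Nonempty (S (σe.symm i) ≃ₗ[R] N i) := by
    have h := hσ (σe.symm i)
    rwa [show σ (σe.symm i) = i from σe.apply_symm_apply i] at h
  exact ⟨e.trans ((lequivCongrLeft R σe).trans
    (DFinsupp.mapRange.linearEquiv fun i ↦ (hσe i).some))⟩

end DirectSum

theorem stmt3_general (K : Type u) [Field K] (R : Type u) [Ring R] [Algebra K R]
    (M : Type u) [AddCommGroup M] [Module R M] [Module K M] [IsScalarTower K R M]
    [FiniteDimensional K M]
    (k : ℕ) (N : Fin k → ModuleCat.{u} R)
    (hsimple : ∀ i, IsSimpleModule R (N i))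
    (hpair : ∀ i j, i ≠ j → IsEmpty ((N i : Type u) ≃ₗ[R] (N j : Type u)))
    (hheadsoc : Nonempty ((M ⧸ sInf {P : Submodule R M | IsCoatom P}) ≃ₗ[R]
      ↥(sSup {P : Submodule R M | IsAtom P} : Submodule R M)))
    (hmult : ∀ i, ∀ s : CompositionSeries (Submodule R M),
      s.head = ⊥ → s.last = ⊤ →
      (Finset.univ.filter (fun j : Fin s.length => FactorIso R s j (N i))).card = 1) :
    Nonempty (M ≃ₗ[R] DirectSum (Fin k) (fun i => (N i : Type u))) ∨
    ∃ N' : ModuleCat.{u} R, IsSimpleModule R N' ∧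
      (∃ f : M →ₗ[R] N', f ≠ 0) ∧
      ∀ i, IsEmpty ((N' : Type u) ≃ₗ[R] (N i : Type u)) := by
  have : IsNoetherian R M := isNoetherian_of_tower K inferInstance
  have : IsArtinian R M := isArtinian_of_tower K inferInstance
  by_cases hquot : ∀ P : Submodule R M, IsCoatom P → ∃ i, Nonempty ((M ⧸ P) ≃ₗ[R] N i)
  · obtain ⟨φ⟩ := hheadsoc
    have hrad := sInf_isCoatom_eq_bot_of_multiplicityOne hmult hquot φ
    have := isSemisimpleModule_sSup_atoms (R := R) (M := M)
    have : IsSemisimpleModule R M :=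
      .congr ((Submodule.quotEquivOfEqBot _ hrad).symm.trans φ)
    exact .inl (IsSemisimpleModule.nonempty_linearEquiv_directSum_of_multiplicityOne
      hpair hmult hquot)
  · push Not at hquot
    obtain ⟨P, hP, hnone⟩ := hquot
    refine .inr ⟨.of R (M ⧸ P), isSimpleModule_iff_isCoatom.mpr hP, ⟨P.mkQ, fun h ↦ ?_⟩, hnone⟩
    exact hP.1 (by rw [← Submodule.ker_mkQ P, h, LinearMap.ker_zero])

/-- Let `M` be a finite-dimensional module over a finite-dimensional `K`-algebra `R`
with `head M ≅ soc M`, and `N₁,…,N_k` pairwise nonisomorphic simple modules, each of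
composition multiplicity exactly `1` in `M`.  Then either `M ≅ N₁ ⊕ ⋯ ⊕ N_k` or there
is a simple module `N`, not isomorphic to any `Nᵢ`, with `Hom(M, N) ≠ 0`. -/
theorem stmt3 (K : Type u) [Field K] (R : Type u) [Ring R] [Algebra K R]
    [FiniteDimensional K R]
    (M : Type u) [AddCommGroup M] [Module R M] [Module K M] [IsScalarTower K R M]
    [FiniteDimensional K M]
    (k : ℕ) (N : Fin k → ModuleCat.{u} R)
    (hsimple : ∀ i, IsSimpleModule R (N i))
    (hpair : ∀ i j, i ≠ j → IsEmpty ((N i : Type u) ≃ₗ[R] (N j : Type u)))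
    (hheadsoc : Nonempty ((M ⧸ sInf {P : Submodule R M | IsCoatom P}) ≃ₗ[R]
      ↥(sSup {P : Submodule R M | IsAtom P} : Submodule R M)))
    (hmult : ∀ i, ∀ s : CompositionSeries (Submodule R M),
      s.head = ⊥ → s.last = ⊤ →
      (Finset.univ.filter (fun j : Fin s.length => FactorIso R s j (N i))).card = 1) :
    Nonempty (M ≃ₗ[R] DirectSum (Fin k) (fun i => (N i : Type u))) ∨
    ∃ N' : ModuleCat.{u} R, IsSimpleModule R N' ∧
      (∃ f : M →ₗ[R] N', f ≠ 0) ∧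
      ∀ i, IsEmpty ((N' : Type u) ≃ₗ[R] (N i : Type u)) :=
  stmt3_general K R M k N hsimple hpair hheadsoc hmult
end

section
/- For a proper abacus Λ (one having a bead strictly greater than some space), the statistic λ₁ − λ_h + h for λ = P(Λ) with h = h(λ) equals b^Λ − b_Λ + 1, where b^Λ is the greatest bead of Λ and b_Λ is the smallest proper bead (smallest bead exceeding some space). Consequently, λ is completely splittable (λ₁ − λ_h + h ≤ p) if and only if b_Λ > b^Λ − p. -/
open scoped Classical

/-- A partition of a natural number: a weakly decreasing, eventually zero sequence of
naturals; `part i` is the `i`-th part for `i ≥ 1` (the value `part 0` is irrelevant). -/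
structure Ptn where
  part : ℕ → ℕ
  antitone : ∀ ⦃i j : ℕ⦄, 1 ≤ i → i ≤ j → part j ≤ part i
  eventually_zero : ∃ N, ∀ i, N ≤ i → part i = 0

namespace Ptn

/-- The height of a partition: the number of (equivalently, the largest index of a)
nonzero part. -/
noncomputable def height (l : Ptn) : ℕ := sSup {i | 1 ≤ i ∧ l.part i ≠ 0}

/-- Row `i` carries a removable node `(i, λ_i)`. -/
def Removable (l : Ptn) (i : ℕ) : Prop := 1 ≤ i ∧ l.part (i + 1) < l.part i

/-- Row `i` carries an addable node `(i, λ_i + 1)`. -/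
def Addable (l : Ptn) (i : ℕ) : Prop := i = 1 ∨ (2 ≤ i ∧ l.part i < l.part (i - 1))

/-- Residue mod `p` of the removable node in row `i`, namely `λ_i - i  (mod p)`. -/
def remRes (p : ℕ) (l : Ptn) (i : ℕ) : ZMod p := (((l.part i : ℤ) - (i : ℤ) : ℤ) : ZMod p)

/-- Residue mod `p` of the addable node in row `i`, namely `λ_i + 1 - i  (mod p)`. -/
def addRes (p : ℕ) (l : Ptn) (i : ℕ) : ZMod p :=
  (((l.part i : ℤ) + 1 - (i : ℤ) : ℤ) : ZMod p)

/-- The removable node in row `r` is normal (signature rule): for every `u < r` the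
number of addable nodes of the same residue in rows `[u, r)` is at most the number of
removable nodes of the same residue in rows `(u, r)`. -/
def Normal (p : ℕ) (l : Ptn) (r : ℕ) : Prop :=
  l.Removable r ∧ ∀ u, 1 ≤ u → u < r →
    ((Finset.Ico u r).filter (fun i => l.Addable i ∧ l.addRes p i = l.remRes p r)).card ≤
    ((Finset.Ioo u r).filter (fun i => l.Removable i ∧ l.remRes p i = l.remRes p r)).card

/-- A good node is the highest normal node of its residue. -/
def Good (p : ℕ) (l : Ptn) (r : ℕ) : Prop :=
  l.Normal p r ∧ ∀ r', l.Normal p r' → l.remRes p r' = l.remRes p r → r ≤ r'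

end Ptn

/-- Dominance order on part-functions: all partial sums of `f` dominate those of `g`. -/
def Dominates (f g : ℕ → ℕ) : Prop :=
  ∀ i, ∑ j ∈ Finset.Icc 1 i, g j ≤ ∑ j ∈ Finset.Icc 1 i, f j

/-- Remove one node from row `r`. -/
def removeAt (f : ℕ → ℕ) (r : ℕ) : ℕ → ℕ := fun i => if i = r then f i - 1 else f i

/-- The canonical beta-set of a partition: `n` is a bead iff `n = λ_i - i` for some `i ≥ 1`. -/
def Beta (l : Ptn) (n : ℤ) : Prop := ∃ i : ℕ, 1 ≤ i ∧ (l.part i : ℤ) - (i : ℤ) = n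

/-- `m` is obtained from `l` by removing one rim `p`-hook (moving a bead of the canonical
beta-set up by `p`). -/
def RemoveHook (p : ℕ) (l m : Ptn) : Prop :=
  ∃ a : ℤ, Beta l a ∧ ¬ Beta l (a - p) ∧
    ∀ n : ℤ, Beta m n ↔ (n ≠ a ∧ (n = a - (p : ℤ) ∨ Beta l n))

/-- A partition with no rim `p`-hook. -/
def IsPCore (p : ℕ) (c : Ptn) : Prop := ¬ ∃ m, RemoveHook p c m

/-- `c` is the `p`-core of `l`. -/
def PCore (p : ℕ) (l c : Ptn) : Prop :=
  Relation.ReflTransGen (RemoveHook p) l c ∧ IsPCore p c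

/-- The `p`-core of `l` is empty. -/
def EmptyCore (p : ℕ) (l : Ptn) : Prop :=
  ∃ c : Ptn, PCore p l c ∧ ∀ i, 1 ≤ i → c.part i = 0

/-- An abacus: eventually beads (`true`) to the left and spaces (`false`) to the right. -/
structure Abacus where
  f : ℤ → Bool
  low : ∃ N : ℤ, ∀ n, n ≤ N → f n = true
  high : ∃ N : ℤ, ∀ n, N ≤ n → f n = false

/-- The abacus `Λ` displays the part-function `l`: if `a 1 > a 2 > ⋯` enumerates the
beads of `Λ`, then `l i` is the number of spaces below the `i`-th bead. -/
def Displays (Λ : Abacus) (l : ℕ → ℕ) : Prop :=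
  ∃ a : ℕ → ℤ,
    (∀ i, 1 ≤ i → a (i + 1) < a i) ∧
    (∀ n : ℤ, Λ.f n = true ↔ ∃ i, 1 ≤ i ∧ a i = n) ∧
    (∀ i, 1 ≤ i → l i = Set.ncard {n : ℤ | n ≤ a i ∧ Λ.f n = false})

/-- For a proper abacus `Λ` displaying `λ`: `λ₁ - λ_h + h = b^Λ - b_Λ + 1`, where `b^Λ`
is the greatest bead and `b_Λ` the smallest proper bead; consequently `λ` is completely
splittable iff `b_Λ > b^Λ - p`. -/
theorem stmt9 (p : ℕ) (l : Ptn) (Λ : Abacus) (hd : Displays Λ l.part)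
    (bmax bmin : ℤ)
    (hmax : Λ.f bmax = true) (hmax' : ∀ n, bmax < n → Λ.f n = false)
    (hmin : Λ.f bmin = true ∧ ∃ s, s < bmin ∧ Λ.f s = false)
    (hmin' : ∀ b', Λ.f b' = true → (∃ s, s < b' ∧ Λ.f s = false) → bmin ≤ b') :
    (l.part 1 : ℤ) - (l.part l.height : ℤ) + (l.height : ℤ) = bmax - bmin + 1 ∧
    ((l.part 1 : ℤ) - (l.part l.height : ℤ) + (l.height : ℤ) ≤ (p : ℤ) ↔
      bmax - (p : ℤ) < bmin) := by
  obtain ⟨a, hdec, hbead, hcount⟩ := hd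
  obtain ⟨N, hN⟩ := Λ.low
  -- strict antitonicity of `a` on indices `≥ 1`
  have hmono : ∀ j i : ℕ, 1 ≤ i → i < j → a j < a i := by
    intro j
    induction j with
    | zero => intro i hi hij; omega
    | succ j ih =>
      intro i hi hij
      rcases eq_or_lt_of_le (Nat.lt_succ_iff.mp hij) with h | h
      · subst h; exact hdec i hi
      · exact lt_trans (hdec j (by omega)) (ih i hi h)
  have hmono' : ∀ j i : ℕ, 1 ≤ i → i ≤ j → a j ≤ a i := by
    intro j i hi hij
    rcases eq_or_lt_of_le hij with h | h
    · subst h; exact le_refl _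
    · exact le_of_lt (hmono j i hi h)
  have hb1 : Λ.f (a 1) = true := (hbead (a 1)).mpr ⟨1, le_refl 1, rfl⟩
  obtain ⟨j, hj1, hja⟩ := (hbead bmax).mp hmax
  have ha1 : a 1 = bmax := by
    have h1 : a 1 ≤ bmax := by
      by_contra h
      have := hmax' (a 1) (by omega)
      rw [hb1] at this; simp at this
    have h2 : bmax ≤ a 1 := hja ▸ hmono' j 1 (le_refl 1) hj1
    omega
  obtain ⟨hminb, s, hs, hsf⟩ := hmin
  obtain ⟨i0, hi01, hi0a⟩ := (hbead bmin).mp hminb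
  have hminmax : bmin ≤ bmax := by
    by_contra h
    have := hmax' bmin (by omega)
    rw [hminb] at this; simp at this
  -- finiteness of sets of spaces
  have hfin : ∀ x : ℤ, {n : ℤ | n ≤ x ∧ Λ.f n = false}.Finite := fun x =>
    (Set.finite_Ioc N x).subset (by
      rintro n ⟨h1, h2⟩
      refine ⟨?_, h1⟩
      by_contra h
      rw [hN n (by omega)] at h2; simp at h2)
  -- height = i0
  have hset : {i : ℕ | 1 ≤ i ∧ l.part i ≠ 0} = Set.Icc 1 i0 := by
    ext i
    simp only [Set.mem_setOf_eq, Set.mem_Icc]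
    constructor
    · rintro ⟨hi, hne⟩
      refine ⟨hi, ?_⟩
      by_contra h
      apply hne
      rw [hcount i hi, Set.ncard_eq_zero (hfin (a i))]
      ext n
      simp only [Set.mem_setOf_eq, Set.mem_empty_iff_false, iff_false, not_and]
      intro hn hf
      have hbi : Λ.f (a i) = true := (hbead (a i)).mpr ⟨i, hi, rfl⟩
      have hne' : n ≠ a i := by
        rintro rfl; rw [hbi] at hf; simp at hf
      have h1 := hmin' (a i) hbi ⟨n, lt_of_le_of_ne hn hne', hf⟩
      have h2 : a i < bmin := hi0a ▸ hmono i i0 hi01 (by omega)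
      omega
    · rintro ⟨hi, hii0⟩
      refine ⟨hi, ?_⟩
      rw [hcount i hi]
      have hmem : s ∈ {n : ℤ | n ≤ a i ∧ Λ.f n = false} := by
        refine ⟨?_, hsf⟩
        have : bmin ≤ a i := hi0a ▸ hmono' i0 i hi hii0
        omega
      have := (Set.ncard_pos (hfin (a i))).mpr ⟨s, hmem⟩
      omega
  have hh : l.height = i0 := by
    unfold Ptn.height
    rw [hset]
    exact csSup_Icc hi01
  -- the three counting identities
  set Sh : Set ℤ := {n : ℤ | n ≤ bmin ∧ Λ.f n = false} with hSh
  set Sp : Set ℤ := {n : ℤ | (bmin < n ∧ n ≤ bmax) ∧ Λ.f n = false} with hSp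
  set Bd : Set ℤ := {n : ℤ | (bmin < n ∧ n ≤ bmax) ∧ Λ.f n = true} with hBd
  have hfinSp : Sp.Finite := (Set.finite_Ioc bmin bmax).subset (by rintro n ⟨⟨h1, h2⟩, _⟩; exact ⟨h1, h2⟩)
  have hfinBd : Bd.Finite := (Set.finite_Ioc bmin bmax).subset (by rintro n ⟨⟨h1, h2⟩, _⟩; exact ⟨h1, h2⟩)
  have e1 : l.part 1 = Sh.ncard + Sp.ncard := by
    rw [hcount 1 (le_refl 1), ha1]
    have : {n : ℤ | n ≤ bmax ∧ Λ.f n = false} = Sh ∪ Sp := by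
      ext n
      simp only [hSh, hSp, Set.mem_setOf_eq, Set.mem_union]
      constructor
      · rintro ⟨h1, h2⟩
        rcases le_or_gt n bmin with h | h
        · exact Or.inl ⟨h, h2⟩
        · exact Or.inr ⟨⟨h, h1⟩, h2⟩
      · rintro (⟨h1, h2⟩ | ⟨⟨h1, h1'⟩, h2⟩)
        · exact ⟨le_trans h1 hminmax, h2⟩
        · exact ⟨h1', h2⟩
    rw [this, Set.ncard_union_eq ?_ (hfin bmin) hfinSp]
    rw [Set.disjoint_left]
    rintro n ⟨h1, _⟩ ⟨⟨h2, _⟩, _⟩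
    omega
  have e2 : Sp.ncard + Bd.ncard = (bmax - bmin).toNat := by
    have hu : Sp ∪ Bd = Set.Ioc bmin bmax := by
      ext n
      simp only [hSp, hBd, Set.mem_setOf_eq, Set.mem_union, Set.mem_Ioc]
      constructor
      · rintro (⟨h, _⟩ | ⟨h, _⟩) <;> exact h
      · intro h
        rcases Bool.eq_false_or_eq_true (Λ.f n) with hb | hb
        · exact Or.inr ⟨h, hb⟩
        · exact Or.inl ⟨h, hb⟩
    have := Set.ncard_union_eq (s := Sp) (t := Bd) ?_ hfinSp hfinBd
    · rw [hu] at this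
      rw [← this, ← Finset.coe_Ioc, Set.ncard_coe_finset, Int.card_Ioc]
    · rw [Set.disjoint_left]
      rintro n ⟨_, h1⟩ ⟨_, h2⟩
      rw [h1] at h2; simp at h2
  have e3 : Bd.ncard = i0 - 1 := by
    have himg : Bd = a '' Set.Ico 1 i0 := by
      ext n
      simp only [hBd, Set.mem_setOf_eq, Set.mem_image, Set.mem_Ico]
      constructor
      · rintro ⟨⟨h1, h2⟩, h3⟩
        obtain ⟨i, hi, hia⟩ := (hbead n).mp h3
        refine ⟨i, ⟨hi, ?_⟩, hia⟩
        by_contra h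
        have : a i ≤ bmin := hi0a ▸ hmono' i i0 hi01 (by omega)
        omega
      · rintro ⟨i, ⟨hi, hii0⟩, rfl⟩
        refine ⟨⟨hi0a ▸ hmono i0 i hi hii0, ha1 ▸ hmono' i 1 (le_refl 1) hi⟩,
          (hbead (a i)).mpr ⟨i, hi, rfl⟩⟩
    rw [himg, Set.ncard_image_of_injOn, ← Finset.coe_Ico, Set.ncard_coe_finset, Nat.card_Ico]
    intro x hx y hy hxy
    simp only [Set.mem_Ico] at hx hy
    by_contra h
    rcases lt_or_gt_of_ne h with h' | h'
    · have := hmono y x hx.1 h'; omega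
    · have := hmono x y hy.1 h'; omega
  have e0 : l.part i0 = Sh.ncard := by
    rw [hcount i0 hi01, hi0a]
  rw [hh, e0, e1]
  constructor
  · omega
  · omega
end

section
/- Let λ be a partition with all of: h(λ) < p, empty p-core, and all λ-normal nodes of the same residue mod p; moreover λ₁ − λ_{h(λ)} + h(λ) = p; and suppose the residue of every core(λ)-normal node equals the residue of the bottom removable node of λ. Then λ = λ^{(H,x)} for some 1 < H < p with H ∤ x, where λ^{(H,x)} is the partition of px whose abacus is obtained from the staircase [0,H) (with all positions < 0 filled) by distributing x upward p-shifts evenly: explicitly λ^{(H,x)} = P(Λ) with Λ having beads exactly at (−∞,0) ∪ [(q+1)p, (q+1)p+r) ∪ [qp+r, qp+H), q = ⌊x/H⌋, r = x mod H. -/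
open scoped Classical

/-!
Write `β_i = λ_i - i` and `h = h(λ)`. The condition `χ(λ) = p` says `β_1 = β_h + p - 1`, so
`β_1 > ⋯ > β_h` lie in a window of `p` consecutive integers. Hence removable nodes in distinct
rows `≤ h` have distinct residues, and a removable node in a row `r < h` shares its residue with no
addable node `β_i + 1`, `i ≤ r`, since `β_h < β_r < β_i + 1 ≤ β_h + p`: all of them are normal.
As all normal nodes have one residue, there is exactly one of them (there is one since
`λ_1 - λ_h = p - h > 0`), and `λ = ((b + p - h)^r, b^(h - r))` with `b = λ_h`.

Above the full region `(-∞, -h)` the beta-set of `λ` is the two runs `[b - h, b - r)` and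
`[b + p - h - r, b + p - h)`, which meet, mod `p`, exactly the runners of the window
`[b - h - r, b - r)`. An empty `p`-core means every runner carries as many beads as for the empty
partition, whose beads above `-h` fill `[-h, 0)`; hence both windows of length `h < p` meet the
same runners, so `b ≡ r (mod p)`. With `b = qp + r` this is `λ^{(h, qh + r)}`.
-/

namespace Ptn

lemma bddAbove_support (l : Ptn) : BddAbove {i | 1 ≤ i ∧ l.part i ≠ 0} := by
  obtain ⟨N, hN⟩ := l.eventually_zero
  exact ⟨N, fun i hi => by by_contra h; exact hi.2 (hN i (by omega))⟩

lemma part_eq_zero_of_height_lt (l : Ptn) {i : ℕ} (hi : l.height < i) : l.part i = 0 := by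
  by_contra hne
  have := le_csSup l.bddAbove_support ⟨by omega, hne⟩
  exact (not_lt.mpr this) hi

lemma part_sub_lt_part_sub (l : Ptn) {i j : ℕ} (hi : 1 ≤ i) (hij : i < j) :
    (l.part j : ℤ) - j < l.part i - i := by
  have := l.antitone hi hij.le
  omega

lemma part_eq_of_forall_not_removable (l : Ptn) {i j : ℕ} (hi : 1 ≤ i)
    (h : ∀ k, i ≤ k → k < j → ¬ l.Removable k) : ∀ k, i ≤ k → k ≤ j → l.part k = l.part i := by
  intro k hik hkj
  induction k, hik using Nat.le_induction with
  | base => rfl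
  | succ k hik ih =>
    have hnot := h k hik (by omega)
    have := l.antitone (hi.trans hik) k.le_succ
    simp only [Removable, not_and, not_lt] at hnot
    rw [← ih (by omega)]
    exact le_antisymm this (hnot (hi.trans hik))

end Ptn

lemma ZMod.intCast_ne_intCast_of_lt_of_lt_add {p : ℕ} {a b : ℤ} (hab : a < b) (hba : b < a + p) :
    (a : ZMod p) ≠ b := by
  rw [Ne, ZMod.intCast_eq_intCast_iff_dvd_sub]
  intro hdvd
  have := Int.le_of_dvd (by omega) hdvd
  omega

namespace Ptn

section WindowOfWidthP

variable {p : ℕ} {l : Ptn} (hchi : (l.part 1 : ℤ) - l.part l.height + l.height = p)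
include hchi

lemma remRes_ne_remRes {i j : ℕ} (hi : 1 ≤ i) (hij : i < j) (hj : j ≤ l.height) :
    l.remRes p j ≠ l.remRes p i := by
  have h1 := l.antitone le_rfl hi
  have h2 := l.antitone (hi.trans hij.le) hj
  have := l.part_sub_lt_part_sub hi hij
  exact ZMod.intCast_ne_intCast_of_lt_of_lt_add this (by omega)

lemma addRes_ne_remRes {i j : ℕ} (hi : 1 ≤ i) (hij : i ≤ j) (hj : j < l.height) :
    l.addRes p i ≠ l.remRes p j := by
  have h1 := l.antitone le_rfl hi
  have h2 := l.antitone (hi.trans hij) hj.le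
  have h3 := l.antitone hi hij
  exact (ZMod.intCast_ne_intCast_of_lt_of_lt_add (by omega) (by omega)).symm

lemma normal_of_removable {r : ℕ} (hr : l.Removable r) (hrh : r < l.height) : l.Normal p r := by
  refine ⟨hr, fun u hu hur => ?_⟩
  rw [Finset.card_eq_zero.mpr]
  · exact Nat.zero_le _
  rw [Finset.filter_eq_empty_iff]
  intro i hi ⟨_, hres⟩
  rw [Finset.mem_Ico] at hi
  exact addRes_ne_remRes hchi (hu.trans hi.1) hi.2.le hrh hres

lemma eq_of_removable_of_removable
    (hres : ∀ r s, l.Normal p r → l.Normal p s → l.remRes p r = l.remRes p s) {r s : ℕ}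
    (hr : l.Removable r) (hs : l.Removable s) (hrh : r < l.height) (hsh : s < l.height) :
    r = s := by
  have hrs := hres r s (normal_of_removable hchi hr hrh) (normal_of_removable hchi hs hsh)
  rcases lt_trichotomy r s with hlt | heq | hgt
  · exact absurd hrs.symm (remRes_ne_remRes hchi hr.1 hlt hsh.le)
  · exact heq
  · exact absurd hrs (remRes_ne_remRes hchi hs.1 hgt hrh.le)

lemma height_pos (hh : l.height < p) : 0 < l.height := by
  by_contra h0
  have h1 := l.part_eq_zero_of_height_lt (i := 1) (by omega)
  omega

lemma exists_two_blocks (hh : l.height < p)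
    (hres : ∀ r s, l.Normal p r → l.Normal p s → l.remRes p r = l.remRes p s) :
    ∃ r, 1 ≤ r ∧ r < l.height ∧ (∀ i, 1 ≤ i → i ≤ r → l.part i = l.part 1) ∧
      ∀ i, r < i → i ≤ l.height → l.part i = l.part l.height := by
  have hpos := height_pos hchi hh
  obtain ⟨r, hr1, hrh, hr⟩ : ∃ r, 1 ≤ r ∧ r < l.height ∧ l.Removable r := by
    by_contra! hnone
    have := l.part_eq_of_forall_not_removable le_rfl (fun k hk hkh => hnone k hk hkh) _ hpos le_rfl
    omega
  have hunique k (hk : k < l.height) : l.Removable k → k = r :=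
    fun hk' => eq_of_removable_of_removable hchi hres hk' hr hk hrh
  refine ⟨r, hr1, hrh, fun i hi hir => ?_, fun i hri hih => ?_⟩
  · exact l.part_eq_of_forall_not_removable le_rfl
      (fun k _ hkr hk => by have := hunique k (by omega) hk; omega) i hi hir
  · have hblock := l.part_eq_of_forall_not_removable (i := r + 1) (j := l.height) (by omega)
      (fun k hk hkh hk' => by have := hunique k hkh hk'; omega)
    rw [hblock i hri hih, hblock _ (by omega) le_rfl]

end WindowOfWidthP
end Ptn

lemma beta_iff_of_two_blocks {l : Ptn} {r h a b : ℕ} (hrh : r ≤ h)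
    (hA : ∀ i, 1 ≤ i → i ≤ r → l.part i = a) (hB : ∀ i, r < i → i ≤ h → l.part i = b)
    (hzero : ∀ i, h < i → l.part i = 0) (n : ℤ) :
    Beta l n ↔ (a - r ≤ n ∧ n < a) ∨ (b - h ≤ n ∧ n < b - r) ∨ n < -h := by
  constructor
  · rintro ⟨i, hi, rfl⟩
    rcases le_or_gt i r with hir | hri
    · rw [hA i hi hir]; omega
    rcases le_or_gt i h with hih | hhi
    · rw [hB i hri hih]; omega
    · rw [hzero i hhi]; omega
  · rintro (⟨h1, h2⟩ | ⟨h1, h2⟩ | hn)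
    · exact ⟨(a - n).toNat, by omega, by rw [hA _ (by omega) (by omega)]; omega⟩
    · exact ⟨(b - n).toNat, by omega, by rw [hB _ (by omega) (by omega)]; omega⟩
    · exact ⟨(-n).toNat, by omega, by rw [hzero _ (by omega)]; omega⟩

noncomputable def runnerCount (p : ℕ) (β : Set ℤ) (N : ℤ) (j : ZMod p) : ℕ :=
  {n ∈ β | N ≤ n ∧ (n : ZMod p) = j}.ncard

/-- The abacus form of an empty `p`-core: each runner `j` carries as many beads as in the abacus
`Set.Iio 0` of the empty partition, counting from any `N ≤ 0` below which all positions are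
beads. -/
def IsBalanced (p : ℕ) (β : Set ℤ) : Prop :=
  ∀ N ≤ 0, (∀ n < N, n ∈ β) → ∀ j, runnerCount p β N j = runnerCount p (Set.Iio 0) N j

lemma isBalanced_Iio_zero (p : ℕ) : IsBalanced p (Set.Iio 0) := fun _ _ _ _ => rfl

/-- Swapping the bead `a` with the space `a - p` on the same runner carries one beta-set onto the
other and preserves every runner count. -/
lemma IsBalanced.of_removeHook {p : ℕ} {l m : Ptn} (hlm : RemoveHook p l m)
    (hm : IsBalanced p {n | Beta m n}) : IsBalanced p {n | Beta l n} := by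
  obtain ⟨a, ha, hap, hchar⟩ := hlm
  have hne : a - p ≠ a := fun h => hap (by rw [h]; exact ha)
  set σ := Equiv.swap a (a - p)
  have hσ n : Beta m n ↔ Beta l (σ n) := by
    rw [hchar n, Equiv.swap_apply_def]
    split_ifs with h1 h2
    · subst h1; simp [hap]
    · subst h2; simp [hne, ha]
    · simp [h1, h2]
  intro N hN hbelow j
  have hNa : N ≤ a - p := by
    by_contra h
    exact hap (hbelow _ (by omega))
  have hσN n : N ≤ σ n ↔ N ≤ n := by
    rw [Equiv.swap_apply_def]
    split_ifs with h1 h2 <;> omega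
  have hσj n : (σ n : ZMod p) = n := by
    have hcast : ((a - p : ℤ) : ZMod p) = a := by simp
    rw [Equiv.swap_apply_def]
    split_ifs with h1 h2
    · rw [hcast, h1]
    · rw [h2, hcast]
    · rfl
  have hbelow' n (hn : n < N) : n ∈ {n | Beta m n} := by
    have : σ n = n := Equiv.swap_apply_of_ne_of_ne (by omega) (by omega)
    rw [Set.mem_ofPred, hσ n, this]
    exact hbelow n hn
  rw [← hm N hN hbelow' j, runnerCount, runnerCount,
    ← Set.ncard_preimage_of_injective_subset_range σ.injective (by simp)]
  congr 1
  ext n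
  simp only [Set.mem_preimage, Set.mem_ofPred, hσ, hσN, hσj]

lemma isBalanced_of_emptyCore {p : ℕ} {l : Ptn} (h : EmptyCore p l) :
    IsBalanced p {n | Beta l n} := by
  obtain ⟨c, ⟨hchain, _⟩, hc0⟩ := h
  have hc : {n | Beta c n} = Set.Iio 0 := by
    ext n
    rw [Set.mem_ofPred, Set.mem_Iio]
    constructor
    · rintro ⟨i, hi, rfl⟩
      rw [hc0 i hi]
      omega
    · intro hn
      exact ⟨(-n).toNat, by omega, by rw [hc0 _ (by omega)]; omega⟩
  induction hchain using Relation.ReflTransGen.head_induction_on with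
  | refl => exact hc ▸ isBalanced_Iio_zero p
  | head hstep _ ih => exact ih.of_removeHook hstep

lemma image_intCast_eq_of_isBalanced {p : ℕ} {β : Set ℤ} (hβ : IsBalanced p β)
    (hbdd : BddAbove β) {N : ℤ} (hN : N ≤ 0) (hbelow : ∀ n < N, n ∈ β) :
    ((↑) '' {n ∈ β | N ≤ n} : Set (ZMod p)) = (↑) '' Set.Ico N 0 := by
  obtain ⟨M, hM⟩ := hbdd
  ext j
  have hfinβ : {n ∈ β | N ≤ n ∧ (n : ZMod p) = j}.Finite :=
    (Set.finite_Icc N M).subset fun n hn => ⟨hn.2.1, hM hn.1⟩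
  have hfin₀ : {n ∈ Set.Iio 0 | N ≤ n ∧ (n : ZMod p) = j}.Finite :=
    (Set.finite_Ico N 0).subset fun n hn => ⟨hn.2.1, hn.1⟩
  have key := (Set.ncard_pos hfinβ).symm.trans
    ((congrArg (0 < ·) (hβ N hN hbelow j)).to_iff.trans (Set.ncard_pos hfin₀))
  simp only [Set.Nonempty, Set.mem_ofPred_eq, Set.mem_Iio] at key
  simp only [Set.mem_image, Set.mem_ofPred_eq, Set.mem_Ico]
  grind

lemma image_intCast_Ico_add_self (p : ℕ) (x y : ℤ) :
    ((↑) '' Set.Ico (x + p) (y + p) : Set (ZMod p)) = (↑) '' Set.Ico x y := by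
  rw [← Set.image_add_const_Ico, Set.image_image]
  simp

/-- Two windows of `h < p` consecutive positions meet the same runners only if they start on
the same runner: otherwise the runner just before one window is met by the other. -/
lemma modEq_of_image_intCast_Ico_eq {p h : ℕ} (h0 : 0 < h) (hhp : h < p) {s t : ℤ}
    (H : ((↑) '' Set.Ico s (s + h) : Set (ZMod p)) = (↑) '' Set.Ico t (t + h)) :
    s ≡ t [ZMOD p] := by
  obtain ⟨m, hm, hms⟩ : (s : ZMod p) ∈ (↑) '' Set.Ico t (t + h) :=
    H ▸ ⟨s, ⟨le_rfl, by omega⟩, rfl⟩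
  rw [Set.mem_Ico] at hm
  rcases eq_or_lt_of_le hm.1 with rfl | htm
  · exact ((ZMod.intCast_eq_intCast_iff _ _ _).1 hms).symm
  obtain ⟨k, hk, hkm⟩ : ((m - 1 : ℤ) : ZMod p) ∈ (↑) '' Set.Ico s (s + h) :=
    H ▸ ⟨m - 1, ⟨by omega, by omega⟩, rfl⟩
  rw [Set.mem_Ico] at hk
  refine absurd ?_ (ZMod.intCast_ne_intCast_of_lt_of_lt_add (p := p) (a := s - 1) (b := k)
    (by omega) (by omega))
  rw [hkm]
  push_cast
  rw [hms]

lemma mod_eq_of_isBalanced {p h r b : ℕ} (hrh : r < h) (hhp : h < p) {β : Set ℤ}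
    (hβ : IsBalanced p β)
    (hβeq : ∀ n, n ∈ β ↔ (b + p - h - r ≤ n ∧ n < b + p - h) ∨ (b - h ≤ n ∧ n < b - r) ∨ n < -h) :
    b % p = r := by
  have hbdd : BddAbove β := ⟨b + p, fun n hn => by rw [hβeq] at hn; omega⟩
  have hsep : {n ∈ β | -(h : ℤ) ≤ n} =
      Set.Ico ((b : ℤ) - h - r + p) (b - h + p) ∪ Set.Ico ((b : ℤ) - h) (b - r) := by
    ext n
    simp only [Set.mem_ofPred_eq, hβeq, Set.mem_union, Set.mem_Ico]
    omega
  have himage := image_intCast_eq_of_isBalanced hβ hbdd (N := -h) (by omega)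
    (fun n hn => (hβeq n).2 (by omega))
  rw [hsep, Set.image_union, image_intCast_Ico_add_self, ← Set.image_union,
    Set.Ico_union_Ico_eq_Ico (by omega) (by omega)] at himage
  have hmod := modEq_of_image_intCast_Ico_eq (by omega) hhp (s := b - h - r) (t := -h)
    (by convert himage using 3 <;> ring)
  have hbr : (b : ℤ) ≡ r [ZMOD p] := by simpa using hmod.add_right (h + r)
  rw [Int.natCast_modEq_iff] at hbr
  rw [hbr, Nat.mod_eq_of_lt (by omega)]

namespace Ptn

noncomputable def betaAbacus (l : Ptn) (c : ℤ) : Abacus where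
  f n := decide (Beta l (n - c))
  low := by
    obtain ⟨N, hN⟩ := l.eventually_zero
    exact ⟨c - N - 1, fun n hn => decide_eq_true ⟨(c - n).toNat, by omega,
      by rw [hN _ (by omega)]; omega⟩⟩
  high := ⟨c + l.part 1, fun n hn => decide_eq_false fun ⟨i, hi, hin⟩ => by
    have := l.antitone le_rfl hi
    omega⟩

/-- Below `λ_i - i` the spaces are counted inside a window `(-M, λ_i - i]` with `M` past the
last part: it holds `λ_i + M - i` positions, of which the `M - i` beads `λ_j - j`, `i ≤ j < M`,
are not spaces. -/
lemma ncard_setOf_not_beta (l : Ptn) {i : ℕ} (hi : 1 ≤ i) :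
    {m : ℤ | m ≤ l.part i - i ∧ ¬ Beta l m}.ncard = l.part i := by
  obtain ⟨N, hN⟩ := l.eventually_zero
  set M := max N i
  set β : ℕ → ℤ := fun j => l.part j - j
  have hset : {m : ℤ | m ≤ β i ∧ ¬ Beta l m} =
      ↑(Finset.Ioc (-(M : ℤ)) (β i) \ (Finset.Ico i M).image β) := by
    ext m
    simp only [Set.mem_ofPred_eq, Finset.coe_sdiff, Set.mem_sdiff, Finset.mem_coe,
      Finset.mem_Ioc, Finset.mem_image, Finset.mem_Ico, Beta, β]
    constructor
    · rintro ⟨hm, hnb⟩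
      refine ⟨⟨?_, hm⟩, fun ⟨j, hj, hjm⟩ => hnb ⟨j, by omega, hjm⟩⟩
      by_contra hle
      exact hnb ⟨(-m).toNat, by omega, by rw [hN _ (by omega)]; omega⟩
    · rintro ⟨⟨hMm, hm⟩, hnot⟩
      refine ⟨hm, fun ⟨j, hj, hjm⟩ => ?_⟩
      rcases lt_or_ge j i with hji | hij
      · have := l.part_sub_lt_part_sub hj hji
        omega
      rcases lt_or_ge j M with hjM | hMj
      · exact hnot ⟨j, ⟨hij, hjM⟩, hjm⟩
      · rw [hN j (by omega)] at hjm
        omega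
  have hinj : Set.InjOn β (Finset.Ico i M) := by
    intro j₁ hj₁ j₂ hj₂ heq
    simp only [Finset.coe_Ico, Set.mem_Ico] at hj₁ hj₂
    by_contra hne
    rcases lt_or_gt_of_ne hne with h | h
    · exact (l.part_sub_lt_part_sub (by omega) h).ne heq.symm
    · exact (l.part_sub_lt_part_sub (by omega) h).ne heq
  have hsub : (Finset.Ico i M).image β ⊆ Finset.Ioc (-(M : ℤ)) (β i) := by
    intro m hm
    simp only [Finset.mem_image, Finset.mem_Ico] at hm
    obtain ⟨j, ⟨hij, hjM⟩, rfl⟩ := hm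
    have := l.antitone hi hij
    simp only [Finset.mem_Ioc, β]
    omega
  rw [hset, Set.ncard_coe_finset, Finset.card_sdiff_of_subset hsub, Int.card_Ioc,
    Finset.card_image_of_injOn hinj, Nat.card_Ico]
  have hiM : i ≤ M := le_max_right N i
  simp only [β]
  omega

lemma displays_betaAbacus (l : Ptn) (c : ℤ) : Displays (l.betaAbacus c) l.part := by
  refine ⟨fun i => l.part i - i + c, fun i hi => ?_, fun n => ?_, fun i hi => ?_⟩
  · have := l.part_sub_lt_part_sub hi (Nat.lt_add_one i)
    dsimp only
    push_cast at this ⊢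
    omega
  · simp only [betaAbacus]
    rw [decide_eq_true_iff]
    exact exists_congr fun i => and_congr_right fun _ => by omega
  · rw [← l.ncard_setOf_not_beta hi, ← Set.ncard_preimage_of_injective_subset_range
      (sub_left_injective (b := c)) fun m _ => ⟨m + c, add_sub_cancel_right m c⟩]
    congr 1
    ext n
    simp only [betaAbacus, decide_eq_false_iff_not, Set.mem_ofPred_eq, Set.mem_preimage]
    exact and_congr_left' (by omega)

end Ptn

theorem stmt10_general (p : ℕ) (l : Ptn)
    (hh : l.height < p)
    (hcore : EmptyCore p l)
    (hres : ∀ r s, l.Normal p r → l.Normal p s → l.remRes p r = l.remRes p s)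
    (hchi : (l.part 1 : ℤ) - (l.part l.height : ℤ) + (l.height : ℤ) = (p : ℤ)) :
    ∃ H x : ℕ, 1 < H ∧ H < p ∧ ¬ H ∣ x ∧
      ∃ Λ : Abacus, Displays Λ l.part ∧
        ∀ n : ℤ, Λ.f n = true ↔
          (n < 0 ∨
           ((((x / H + 1) * p : ℕ) : ℤ) ≤ n ∧ n < (((x / H + 1) * p + x % H : ℕ) : ℤ)) ∨
           ((((x / H) * p + x % H : ℕ) : ℤ) ≤ n ∧ n < (((x / H) * p + H : ℕ) : ℤ))) := by
  obtain ⟨r, hr1, hrh, hblockA, hblockB⟩ := Ptn.exists_two_blocks hchi hh hres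
  set h := l.height
  set b := l.part h
  have hbeta (n : ℤ) : Beta l n ↔
      (b + p - h - r ≤ n ∧ n < b + p - h) ∨ (b - h ≤ n ∧ n < b - r) ∨ n < -h := by
    rw [beta_iff_of_two_blocks hrh.le hblockA hblockB (fun i hi => l.part_eq_zero_of_height_lt hi),
      show ((l.part 1 : ℕ) : ℤ) = b + p - h by omega]
  have hbr : b % p = r := mod_eq_of_isBalanced hrh hh (isBalanced_of_emptyCore hcore) hbeta
  set q := b / p
  have hb : (b : ℤ) = q * p + r := by
    rw [← hbr]
    exact_mod_cast (Nat.div_add_mod' b p).symm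
  have hxdiv : (q * h + r) / h = q := by
    rw [Nat.add_comm, Nat.add_mul_div_right _ _ (by omega), Nat.div_eq_of_lt hrh, zero_add]
  have hxmod : (q * h + r) % h = r := by
    rw [Nat.add_comm, Nat.add_mul_mod_self_right, Nat.mod_eq_of_lt hrh]
  refine ⟨h, q * h + r, by omega, hh, ?_, l.betaAbacus h, l.displays_betaAbacus h, fun n => ?_⟩
  · rw [Nat.dvd_iff_mod_eq_zero, hxmod]
    omega
  · simp only [Ptn.betaAbacus, decide_eq_true_iff, hbeta, hxdiv, hxmod]
    push_cast [add_mul, one_mul]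
    rw [hb]
    generalize (q : ℤ) * p = Q
    omega

/-- A partition with height `< p`, empty `p`-core, all normal nodes of one residue,
`χ(λ) = p`, and all core-normal residues equal to the bottom removable residue, is of
the form `λ^{(H,x)}` with `1 < H < p`, `H ∤ x`. -/
theorem stmt10 (p : ℕ) (hp : 0 < p) (l : Ptn)
    (hh : l.height < p)
    (hcore : EmptyCore p l)
    (hres : ∀ r s, l.Normal p r → l.Normal p s → l.remRes p r = l.remRes p s)
    (hchi : (l.part 1 : ℤ) - (l.part l.height : ℤ) + (l.height : ℤ) = (p : ℤ))
    (hcoreres : ∀ c : Ptn, PCore p l c → ∀ s, c.Normal p s →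
      c.remRes p s = l.remRes p l.height) :
    ∃ H x : ℕ, 1 < H ∧ H < p ∧ ¬ H ∣ x ∧
      ∃ Λ : Abacus, Displays Λ l.part ∧
        ∀ n : ℤ, Λ.f n = true ↔
          (n < 0 ∨
           ((((x / H + 1) * p : ℕ) : ℤ) ≤ n ∧ n < (((x / H + 1) * p + x % H : ℕ) : ℤ)) ∨
           ((((x / H) * p + x % H : ℕ) : ℤ) ≤ n ∧ n < (((x / H) * p + H : ℕ) : ℤ))) :=
  stmt10_general p l hh hcore hres hchi
end

section
/- Let p, H, x be integers with (p+3)/2 ≤ H < p, and define for given x: Q = ⌊x/H⌋, R = x mod H, h = H − R, and for given i with 0 < i ≤ min(x, h): m = max{i, i + h − x}. Then the condition π(H,x,i) — namely (2 < H < p, H ∤ x, 0 < i ≤ x, i ≤ h, x > 2) together with the inequality m·⌊(p − h + x − 1)/(p − m)⌋ ≥ H − Q − 1 + h·⌊(x − Q − 1)/(p − H + 1)⌋ + (R − 1)·⌊(x − Q − 2)/(p − H + 1)⌋ — holds if and only if x = QH + 1 for some integer Q ≥ 1 and i = H − 1. -/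
lemma rhs_mono (N p m h : ℕ) (hmh : m ≤ h) (hhp : h < p) :
    m * (N / (p - m)) ≤ h * (N / (p - h)) :=
  Nat.mul_le_mul hmh (Nat.div_le_div_left (by omega) (by omega))

lemma div_cross (a c d e : ℕ) (hd : 0 < d) (he : 0 < e) (h : c * d ≤ a * e) :
    c / e ≤ a / d := by
  rw [Nat.le_div_iff_mul_le hd]
  have h1 : c / e * e ≤ c := Nat.div_mul_le_self c e
  have h2 : c / e * d * e ≤ a * e := by
    calc c / e * d * e = c / e * e * d := by ring
      _ ≤ c * d := Nat.mul_le_mul_right d h1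
      _ ≤ a * e := h
  exact Nat.le_of_mul_le_mul_right h2 he

lemma key1 (H e Q s : ℕ) (h1 : e + 3 ≤ H) (hQ : 1 ≤ Q) (hs : 1 ≤ s) :
    (H * Q + s) * (e + 1) ≤ (Q * (H - 1) + s) * ((e + 1) + s) := by
  obtain ⟨H', rfl⟩ : ∃ H', H = H' + 1 := ⟨H - 1, by omega⟩
  simp only [Nat.add_sub_cancel]
  nlinarith [Nat.mul_le_mul (le_refl Q) (show e + 2 ≤ H' by omega),
    Nat.mul_le_mul (le_refl (Q * H')) hs]

lemma key2 (H e Q : ℕ) (h1 : e + 3 ≤ H) (hQ : 1 ≤ Q) :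
    (H * Q - 1) * (e + 1) ≤ Q * (H - 1) * (e + 2) := by
  obtain ⟨H', rfl⟩ : ∃ H', H = H' + 1 := ⟨H - 1, by omega⟩
  obtain ⟨Q', rfl⟩ : ∃ Q', Q = Q' + 1 := ⟨Q - 1, by omega⟩
  simp only [Nat.add_sub_cancel]
  have h2 : (H' + 1) * (Q' + 1) - 1 = H' * Q' + H' + Q' := by
    have : (H' + 1) * (Q' + 1) = H' * Q' + H' + Q' + 1 := by ring
    omega
  rw [h2]
  nlinarith [Nat.mul_le_mul (le_refl Q') (show e + 2 ≤ H' by omega)]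

lemma aux_mul_pred (q H : ℕ) (h : 1 ≤ H) : q * (H - 1) + q = q * H := by
  conv_rhs => rw [← Nat.sub_add_cancel h]
  rw [Nat.mul_add, mul_one]

/-- The condition `π(H,x,i)` from the paper, with `Q = x / H`, `R = x % H`, `h = H - R`,
`m = max i (i + h - x)` (all natural-number operations; divisions are floors). -/
def piCond (p H x i : ℕ) : Prop :=
  2 < H ∧ H < p ∧ ¬ H ∣ x ∧ 0 < i ∧ i ≤ x ∧ i ≤ H - x % H ∧ 2 < x ∧
    (H : ℤ) - (x / H : ℕ) - 1
      + ((H - x % H : ℕ) : ℤ) * (((x - x / H - 1) / (p - H + 1) : ℕ) : ℤ)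
      + ((x % H : ℤ) - 1) * (((x - x / H - 2) / (p - H + 1) : ℕ) : ℤ)
    ≤ ((max i (i + (H - x % H) - x)
        * ((p - (H - x % H) + x - 1) / (p - max i (i + (H - x % H) - x)) : ℕ) : ℕ) : ℤ)

set_option maxHeartbeats 1000000 in
/-- For `(p+3)/2 ≤ H < p`, the condition `π(H,x,i)` holds iff `x = QH + 1` for some
`Q ≥ 1` and `i = H - 1`. -/
theorem stmt14 (p H : ℕ) (hH : p + 3 ≤ 2 * H) (hHp : H < p) (x i : ℕ) :
    piCond p H x i ↔ ((∃ Q : ℕ, 1 ≤ Q ∧ x = Q * H + 1) ∧ i = H - 1) := by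
  obtain ⟨e, rfl⟩ : ∃ e, p = H + e := ⟨p - H, by omega⟩
  have he1 : 1 ≤ e := by omega
  have heH : e + 3 ≤ H := by omega
  constructor
  · rintro ⟨h2H, -, hndvd, hi0, hix, hih, h2x, hineq⟩
    have hd1 : H + e - H + 1 = e + 1 := by omega
    rw [hd1, ← Int.natCast_mod] at hineq
    set q := x / H with hqdef
    set r := x % H with hrdef
    have hx : H * q + r = x := Nat.div_add_mod x H
    have hr1 : 1 ≤ r := Nat.one_le_iff_ne_zero.mpr
      (fun h0 => hndvd (Nat.dvd_of_mod_eq_zero (hrdef ▸ h0)))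
    have hrH : r < H := hrdef ▸ Nat.mod_lt x (by omega)
    clear_value q r
    clear hqdef hrdef hndvd
    have hcomm : H * q = q * H := Nat.mul_comm H q
    have hmul : q * (H - 1) + q = q * H := aux_mul_pred q H (by omega)
    -- Step 1 : 1 ≤ q
    have hq1 : 1 ≤ q := by
      by_contra hq
      have hq0 : q = 0 := by omega
      rw [hq0, Nat.mul_zero, Nat.zero_add] at hx
      have hnum : H + e - (H - r) + x - 1 = (x - 1) + (e + r) := by omega
      rw [hnum] at hineq
      have hmh : max i (i + (H - r) - x) ≤ H - r := max_le hih (by omega)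
      have hub := rhs_mono ((x - 1) + (e + r)) (H + e) (max i (i + (H - r) - x))
        (H - r) hmh (by omega)
      have hden : H + e - (H - r) = e + r := by omega
      rw [hden, Nat.add_div_right _ (show 0 < e + r by omega),
        Nat.div_eq_of_lt (show x - 1 < e + r by omega)] at hub
      -- hub : max ... * (...) ≤ (H - r) * (0 + 1)
      have hub' : max i (i + (H - r) - x)
          * (((x - 1) + (e + r)) / (H + e - max i (i + (H - r) - x))) ≤ H - r := by omega
      have hubZ : ((max i (i + (H - r) - x)
          * (((x - 1) + (e + r)) / (H + e - max i (i + (H - r) - x))) : ℕ) : ℤ)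
          ≤ (H : ℤ) - r := by
        have : ((H - r : ℕ) : ℤ) = (H : ℤ) - r := by omega
        calc ((max i (i + (H - r) - x)
            * (((x - 1) + (e + r)) / (H + e - max i (i + (H - r) - x))) : ℕ) : ℤ)
            ≤ ((H - r : ℕ) : ℤ) := by exact_mod_cast hub'
          _ = (H : ℤ) - r := this
      have nn1 : (0:ℤ) ≤ ((H - r : ℕ) : ℤ) * (((x - q - 1) / (e + 1) : ℕ) : ℤ) :=
        mul_nonneg (Int.natCast_nonneg _) (Int.natCast_nonneg _)
      have nn2 : (0:ℤ) ≤ ((r : ℤ) - 1) * (((x - q - 2) / (e + 1) : ℕ) : ℤ) :=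
        mul_nonneg (by
          have : (1:ℤ) ≤ (r:ℤ) := by exact_mod_cast hr1
          linarith) (Int.natCast_nonneg _)
      have hqZ : (q : ℤ) = 0 := by exact_mod_cast hq0
      have hrx : (r : ℤ) = (x : ℤ) := by exact_mod_cast hx
      have hx3 : (3 : ℤ) ≤ (x : ℤ) := by exact_mod_cast h2x
      linarith
    have hHq : H ≤ H * q := Nat.le_mul_of_pos_right H hq1
    have hxH : H + 1 ≤ x := by omega
    -- Step 2 : m = i
    have hmi : max i (i + (H - r) - x) = i := max_eq_left (by omega)
    rw [hmi] at hineq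
    -- Step 3 : r = 1
    have hrone : r = 1 := by
      by_contra hr
      have hr2 : 2 ≤ r := by omega
      have hnum : H + e - (H - r) + x - 1 = (x - 1) + (e + r) := by omega
      rw [hnum] at hineq
      have hub := rhs_mono ((x - 1) + (e + r)) (H + e) i (H - r) hih (by omega)
      have hden : H + e - (H - r) = e + r := by omega
      rw [hden, Nat.add_div_right _ (show 0 < e + r by omega)] at hub
      have he2 : x - q - 1 = q * (H - 1) + (r - 1) := by omega
      have he3 : x - 1 = H * q + (r - 1) := by omega
      have he4 : x - q - 2 = q * (H - 1) + (r - 2) := by omega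
      have hAG : (x - 1) / (e + r) ≤ (x - q - 1) / (e + 1) := by
        apply div_cross _ _ _ _ (by omega) (by omega)
        rw [he2, he3]
        have hk := key1 H e q (r - 1) heH hq1 (by omega)
        have h4 : (e + 1) + (r - 1) = e + r := by omega
        rwa [h4] at hk
      have hQB : q ≤ (x - q - 2) / (e + 1) := by
        rw [Nat.le_div_iff_mul_le (by omega)]
        have : q * (e + 1) ≤ q * (H - 1) := Nat.mul_le_mul (le_refl q) (by omega)
        omega
      have hcHr : ((H - r : ℕ) : ℤ) = (H : ℤ) - r := by omega
      rw [hcHr] at hineq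
      have hubZ : ((i * (((x - 1) + (e + r)) / (H + e - i)) : ℕ) : ℤ)
          ≤ ((H : ℤ) - r) * ((((x - 1) / (e + r) : ℕ) : ℤ) + 1) := by
        calc ((i * (((x - 1) + (e + r)) / (H + e - i)) : ℕ) : ℤ)
            ≤ (((H - r) * ((x - 1) / (e + r) + 1) : ℕ) : ℤ) := by exact_mod_cast hub
          _ = ((H : ℤ) - r) * ((((x - 1) / (e + r) : ℕ) : ℤ) + 1) := by
              rw [Nat.cast_mul, Nat.cast_add, Nat.cast_one, hcHr]
      have hAGZ : (((x - 1) / (e + r) : ℕ) : ℤ) ≤ (((x - q - 1) / (e + 1) : ℕ) : ℤ) := by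
        exact_mod_cast hAG
      have hQBZ : (q : ℤ) ≤ (((x - q - 2) / (e + 1) : ℕ) : ℤ) := by exact_mod_cast hQB
      have hrZ : (2 : ℤ) ≤ (r : ℤ) := by exact_mod_cast hr2
      have hqZ : (1 : ℤ) ≤ (q : ℤ) := by exact_mod_cast hq1
      have hrHZ : (r : ℤ) ≤ (H : ℤ) := by exact_mod_cast hrH.le
      have hp1 : ((H : ℤ) - r) * ((((x - 1) / (e + r) : ℕ) : ℤ) + 1)
          ≤ ((H : ℤ) - r) * ((((x - q - 1) / (e + 1) : ℕ) : ℤ) + 1) :=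
        mul_le_mul_of_nonneg_left (by linarith) (by linarith)
      have hp2 : ((r : ℤ) - 1) * (q : ℤ)
          ≤ ((r : ℤ) - 1) * (((x - q - 2) / (e + 1) : ℕ) : ℤ) :=
        mul_le_mul_of_nonneg_left hQBZ (by linarith)
      have hp3 : (0 : ℤ) ≤ ((r : ℤ) - 2) * (q : ℤ) :=
        mul_nonneg (by linarith) (by linarith)
      linarith
    -- Step 4 : i = H - 1
    have hiH1 : i ≤ H - 1 := by omega
    have hi : i = H - 1 := by
      by_contra hi'
      have hi2 : i ≤ H - 2 := by omega
      rw [hrone] at hineq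
      simp only [Nat.cast_one] at hineq
      have hnum : H + e - (H - 1) + x - 1 = (x - 2) + (e + 2) := by omega
      rw [hnum] at hineq
      have hub := rhs_mono ((x - 2) + (e + 2)) (H + e) i (H - 2) hi2 (by omega)
      have hden : H + e - (H - 2) = e + 2 := by omega
      rw [hden, Nat.add_div_right _ (show 0 < e + 2 by omega)] at hub
      have he2 : x - q - 1 = q * (H - 1) := by omega
      have he3 : x - 2 = H * q - 1 := by omega
      have hAG : (x - 2) / (e + 2) ≤ (x - q - 1) / (e + 1) := by
        apply div_cross _ _ _ _ (by omega) (by omega)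
        rw [he2, he3]
        exact key2 H e q heH hq1
      have hQA : q ≤ (x - q - 1) / (e + 1) := by
        rw [Nat.le_div_iff_mul_le (by omega)]
        have : q * (e + 1) ≤ q * (H - 1) := Nat.mul_le_mul (le_refl q) (by omega)
        omega
      have hcH1 : ((H - 1 : ℕ) : ℤ) = (H : ℤ) - 1 := by omega
      rw [hcH1] at hineq
      have hcH2 : ((H - 2 : ℕ) : ℤ) = (H : ℤ) - 2 := by omega
      have hubZ : ((i * (((x - 2) + (e + 2)) / (H + e - i)) : ℕ) : ℤ)
          ≤ ((H : ℤ) - 2) * ((((x - 2) / (e + 2) : ℕ) : ℤ) + 1) := by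
        calc ((i * (((x - 2) + (e + 2)) / (H + e - i)) : ℕ) : ℤ)
            ≤ (((H - 2) * ((x - 2) / (e + 2) + 1) : ℕ) : ℤ) := by exact_mod_cast hub
          _ = ((H : ℤ) - 2) * ((((x - 2) / (e + 2) : ℕ) : ℤ) + 1) := by
              rw [Nat.cast_mul, Nat.cast_add, Nat.cast_one, hcH2]
      have hAGZ : (((x - 2) / (e + 2) : ℕ) : ℤ) ≤ (((x - q - 1) / (e + 1) : ℕ) : ℤ) := by
        exact_mod_cast hAG
      have hQAZ : (q : ℤ) ≤ (((x - q - 1) / (e + 1) : ℕ) : ℤ) := by exact_mod_cast hQA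
      have hqZ : (1 : ℤ) ≤ (q : ℤ) := by exact_mod_cast hq1
      have hHZ : (4 : ℤ) ≤ (H : ℤ) := by exact_mod_cast (show 4 ≤ H by omega)
      have hp1 : ((H : ℤ) - 2) * ((((x - 2) / (e + 2) : ℕ) : ℤ) + 1)
          ≤ ((H : ℤ) - 2) * ((((x - q - 1) / (e + 1) : ℕ) : ℤ) + 1) :=
        mul_le_mul_of_nonneg_left (by linarith) (by linarith)
      linarith
    exact ⟨⟨q, hq1, by omega⟩, hi⟩
  · rintro ⟨⟨Q, hQ1, rfl⟩, rfl⟩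
    have hHQ : H ≤ Q * H := Nat.le_mul_of_pos_left H hQ1
    have hmod : (Q * H + 1) % H = 1 := by
      rw [add_comm, Nat.add_mul_mod_self_right]
      exact Nat.mod_eq_of_lt (by omega)
    have hdivq : (Q * H + 1) / H = Q := by
      rw [add_comm, Nat.add_mul_div_right _ _ (show 0 < H by omega),
        Nat.div_eq_of_lt (by omega)]
      omega
    refine ⟨by omega, by omega, ?_, by omega, by omega, ?_, by omega, ?_⟩
    · intro hdvd
      obtain ⟨k, hk⟩ := hdvd
      rw [hk, Nat.mul_mod_right] at hmod
      omega
    · rw [hmod]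
    · have hd1 : H + e - H + 1 = e + 1 := by omega
      rw [hd1]
      have hmodZ : ((Q * H + 1 : ℕ) : ℤ) % ((H : ℕ) : ℤ) = 1 := by
        rw [← Int.natCast_mod, hmod]; rfl
      rw [hmodZ, hmod, hdivq]
      have hmax : max (H - 1) (H - 1 + (H - 1) - (Q * H + 1)) = H - 1 :=
        max_eq_left (by omega)
      rw [hmax]
      have hden : H + e - (H - 1) = e + 1 := by omega
      have hxq : Q * H + 1 - Q - 1 = Q * (H - 1) := by
        have := aux_mul_pred Q H (by omega)
        omega
      rw [hden, hxq]
      have hnum : e + 1 + (Q * H + 1) - 1 = Q * H + (e + 1) := by omega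
      rw [hnum, Nat.add_div_right _ (show 0 < e + 1 by omega)]
      have hAD' : ((Q * (H - 1) / (e + 1) : ℕ) : ℤ) ≤ ((Q * H / (e + 1) : ℕ) : ℤ) := by
        exact_mod_cast Nat.div_le_div_right (c := e + 1)
          (Nat.mul_le_mul (le_refl Q) (by omega))
      have hc : ((H - 1 : ℕ) : ℤ) = (H : ℤ) - 1 := by omega
      rw [Nat.cast_mul, Nat.cast_add, Nat.cast_one, hc]
      have hprod : ((H:ℤ) - 1) * ((Q * (H - 1) / (e + 1) : ℕ) : ℤ)
          ≤ ((H:ℤ) - 1) * ((Q * H / (e + 1) : ℕ) : ℤ) :=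
        mul_le_mul_of_nonneg_left hAD' (by
          have : (4:ℤ) ≤ (H:ℤ) := by exact_mod_cast (show 4 ≤ H by omega)
          linarith)
      have hQ0 : (0:ℤ) ≤ (Q:ℤ) := Int.natCast_nonneg Q
      linarith
end

section
/- Let p ≥ 2 and let H, x be integers with 1 < H < p, x > 0 and H ∤ x; set Q = ⌊x/H⌋, R = x mod H, and define b_y = p + H − 1 + y + (H − R)·⌊y/(p − H + 1)⌋ + (R − 1)·⌊(y − 1)/(p − H + 1)⌋ and a_y = H + y + ⌊(R − 1 + y)/(p − 1)⌋ for y ≥ 0. Then for all 0 ≤ y ≤ Q one has b_{x − 2Q + y − 1} ≥ a_{y + p − 2}. -/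
/-- `a_y = H + y + ⌊(R - 1 + y)/(p - 1)⌋` where `R = x - H·⌊x/H⌋`. -/
def aSeq (p H x t : ℤ) : ℤ :=
  H + t + ((x - H * x.fdiv H) - 1 + t).fdiv (p - 1)

/-- `b_y = p + H - 1 + y + (H - R)·⌊y/(p - H + 1)⌋ + (R - 1)·⌊(y - 1)/(p - H + 1)⌋`. -/
def bSeq (p H x t : ℤ) : ℤ :=
  p + H - 1 + t + (H - (x - H * x.fdiv H)) * (t.fdiv (p - H + 1))
    + ((x - H * x.fdiv H) - 1) * ((t - 1).fdiv (p - H + 1))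

/-!
Write `R = x mod H ≥ 1`, `m = p - H + 1` and `t = x - 2Q + y - 1 = (H - 2)Q + R + y - 1`.
Up to the floor terms, `b_t - a_{y+p-2}` is `t - y - R + 1 = (H - 2)Q ≥ 0`. For the floors,
`⌊(t - 1)/m⌋ ≥ ⌊t/m⌋ - 1` turns the two floor terms of `b_t` into at least
`(H - 1)⌊t/m⌋ - (R - 1)`, while the floor in `a_{y+p-2}` is `1 + ⌊(R + y - 2)/(p - 1)⌋` and
`⌊(R + y - 2)/(p - 1)⌋ ≤ ⌊t/m⌋` because the numerator is at most `t` and `m ≤ p - 1`.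
-/

namespace Int

theorem ediv_le_ediv_left {a b c : ℤ} (ha : 0 ≤ a) (hc : 0 < c) (hcb : c ≤ b) :
    a / b ≤ a / c :=
  Int.le_ediv_of_mul_le hc <| calc
    a / b * c ≤ a / b * b := mul_le_mul_of_nonneg_left hcb (Int.ediv_nonneg ha (hc.le.trans hcb))
    _ ≤ a := Int.ediv_mul_le a (hc.trans_le hcb).ne'

theorem ediv_sub_one_le_sub_ediv {a b k : ℤ} (hb : 0 < b) (hk : k ≤ b) :
    a / b - 1 ≤ (a - k) / b := by
  have hshift : (a + -1 * b) / b = a / b - 1 := by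
    rw [Int.add_mul_ediv_right a (-1) hb.ne', Int.add_neg_one]
  rw [← hshift]
  exact Int.ediv_le_ediv hb (by linarith)

end Int

theorem aSeq_eq {p H : ℤ} (x t : ℤ) (hp : 1 ≤ p) (hH : 0 ≤ H) :
    aSeq p H x t = H + t + (x % H - 1 + t) / (p - 1) := by
  rw [aSeq, Int.fdiv_eq_ediv_of_nonneg x hH, ← Int.emod_def,
    Int.fdiv_eq_ediv_of_nonneg _ (by omega)]

theorem bSeq_eq {p H : ℤ} (x t : ℤ) (hHp : H ≤ p + 1) (hH : 0 ≤ H) :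
    bSeq p H x t = p + H - 1 + t + (H - x % H) * (t / (p - H + 1))
      + (x % H - 1) * ((t - 1) / (p - H + 1)) := by
  rw [bSeq, Int.fdiv_eq_ediv_of_nonneg x hH, ← Int.emod_def,
    Int.fdiv_eq_ediv_of_nonneg _ (by omega), Int.fdiv_eq_ediv_of_nonneg _ (by omega)]

theorem aSeq_le_bSeq {p H x y t : ℤ} (hH : 2 ≤ H) (hHp : H < p) (hR : 1 ≤ x % H)
    (hy : 0 ≤ y) (ht : x % H + y - 1 ≤ t) :
    aSeq p H x (y + p - 2) ≤ bSeq p H x t := by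
  rw [aSeq_eq x _ (by omega) (by omega), bSeq_eq x _ (by omega) (by omega)]
  set R := x % H
  have hm : 0 < p - H + 1 := by omega
  have hshift : (R - 1 + (y + p - 2)) / (p - 1) = (R + y - 2) / (p - 1) + 1 := by
    rw [show R - 1 + (y + p - 2) = R + y - 2 + 1 * (p - 1) by ring,
      Int.add_mul_ediv_right _ _ (by omega)]
  have hfloor : (R + y - 2) / (p - 1) ≤ t / (p - H + 1) := calc
    (R + y - 2) / (p - 1) ≤ t / (p - 1) := Int.ediv_le_ediv (by omega) (by omega)
    _ ≤ t / (p - H + 1) := Int.ediv_le_ediv_left (by omega) hm (by omega)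
  have hpred : t / (p - H + 1) - 1 ≤ (t - 1) / (p - H + 1) :=
    Int.ediv_sub_one_le_sub_ediv hm (by omega)
  have hu : 0 ≤ t / (p - H + 1) := Int.ediv_nonneg (by omega) hm.le
  nlinarith [mul_le_mul_of_nonneg_left hpred (by omega : (0 : ℤ) ≤ R - 1),
    mul_nonneg (by omega : (0 : ℤ) ≤ H - 2) hu]

theorem stmt15_general (p H x : ℤ) (hH : 1 < H) (hHp : H < p)
    (hnd : ¬ H ∣ x)
    (y : ℤ) (hy0 : 0 ≤ y) (hyQ : y ≤ x.fdiv H) :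
    aSeq p H x (y + p - 2) ≤ bSeq p H x (x - 2 * x.fdiv H + y - 1) := by
  rw [Int.fdiv_eq_ediv_of_nonneg x (by omega)] at hyQ ⊢
  have hR : 0 < x % H :=
    (Int.emod_nonneg x (by omega)).lt_of_ne' (mt Int.dvd_of_emod_eq_zero hnd)
  have hdecomp : x - 2 * (x / H) = (H - 2) * (x / H) + x % H := by
    have := Int.mul_ediv_add_emod x H
    linarith
  refine aSeq_le_bSeq (by omega) hHp hR hy0 ?_
  nlinarith [mul_nonneg (by omega : (0 : ℤ) ≤ H - 2) (hy0.trans hyQ)]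

/-- For `p ≥ 2`, `1 < H < p`, `x > 0`, `H ∤ x`, `Q = ⌊x/H⌋`, one has
`b_{x - 2Q + y - 1} ≥ a_{y + p - 2}` for all `0 ≤ y ≤ Q`. -/
theorem stmt15 (p H x : ℤ) (hp : 2 ≤ p) (hH : 1 < H) (hHp : H < p)
    (hx : 0 < x) (hnd : ¬ H ∣ x)
    (y : ℤ) (hy0 : 0 ≤ y) (hyQ : y ≤ x.fdiv H) :
    aSeq p H x (y + p - 2) ≤ bSeq p H x (x - 2 * x.fdiv H + y - 1) :=
  stmt15_general p H x hH hHp hnd y hy0 hyQ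
end

section
/- Let H and x be integers with 1 < H < p, x > 0, H ∤ x; set Q = ⌊x/H⌋, R = x mod H, S₁ = [0, p−1] \ {H − R}, S₂ = {H − R} ∪ [H, p−1]. Let a₀ < a₁ < ⋯ enumerate {n ≥ H : n mod p ∈ S₁} and b₀ < b₁ < ⋯ enumerate {n ≥ p + H − R : n mod p ∈ S₂}. Then a_y = H + y + ⌊(R − 1 + y)/(p − 1)⌋ and b_y = p + H − 1 + y + (H − R)·⌊y/(p − H + 1)⌋ + (R − 1)·⌊(y − 1)/(p − H + 1)⌋ for all y ≥ 0. -/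
/-!
Both sets are `p`-periodic. If `φ 0 < ⋯ < φ (L - 1)` lists the residues of such a set inside
one window of length `p`, then `L * k + r ↦ p * k + φ r` (`0 ≤ r < L`) is a strictly increasing
map of `ℤ` onto the set, so the enumeration of the part above a point of the set is a shift of
this map. For `S₁` one takes `L = p - 1` and `φ r = H - R + 1 + r`, for `S₂` one takes
`L = p - H + 1`, `φ 0 = H - R` and `φ r = H - 1 + r` for `r ≥ 1`; the claimed formulas are
these maps written out.
-/

/-- With `R = x mod H`: `n mod p ∈ S₁ = [0, p-1] \ {H - R}`. -/
def inS1 (p H x n : ℤ) : Prop :=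
  0 ≤ n.emod p ∧ n.emod p ≤ p - 1 ∧ n.emod p ≠ H - x.emod H

/-- With `R = x mod H`: `n mod p ∈ S₂ = {H - R} ∪ [H, p-1]`. -/
def inS2 (p H x n : ℤ) : Prop :=
  n.emod p = H - x.emod H ∨ (H ≤ n.emod p ∧ n.emod p ≤ p - 1)

open Set

def blockSeq (L p : ℤ) (φ : ℤ → ℤ) (t : ℤ) : ℤ := p * (t / L) + φ (t % L)

section blockSeq

variable {L p : ℤ} {φ : ℤ → ℤ}

lemma exists_eq_mul_add (hL : 0 < L) (t : ℤ) : ∃ k r, 0 ≤ r ∧ r < L ∧ t = L * k + r :=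
  ⟨t / L, t % L, Int.emod_nonneg t hL.ne', Int.emod_lt_of_pos t hL,
    (Int.mul_ediv_add_emod t L).symm⟩

lemma mul_add_ediv_emod (hL : 0 < L) {k r : ℤ} (hr0 : 0 ≤ r) (hrL : r < L) :
    (L * k + r) / L = k ∧ (L * k + r) % L = r :=
  (Int.ediv_emod_unique hL).2 ⟨add_comm _ _, hr0, hrL⟩

lemma blockSeq_mul_add (hL : 0 < L) {r : ℤ} (hr0 : 0 ≤ r) (hrL : r < L) (k : ℤ) :
    blockSeq L p φ (L * k + r) = p * k + φ r := by
  obtain ⟨hdiv, hmod⟩ := mul_add_ediv_emod (k := k) hL hr0 hrL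
  rw [blockSeq, hdiv, hmod]

lemma blockSeq_strictMono (hL : 0 < L) (hφ : StrictMonoOn φ (Ico 0 L))
    (hwrap : φ (L - 1) < φ 0 + p) : StrictMono (blockSeq L p φ) := by
  refine strictMono_int_of_lt_succ fun t => ?_
  obtain ⟨k, r, hr0, hrL, rfl⟩ := exists_eq_mul_add hL t
  rcases (Int.add_one_le_iff.2 hrL).lt_or_eq with hlt | heq
  · rw [add_assoc, blockSeq_mul_add hL hr0 hrL, blockSeq_mul_add hL (by omega) hlt]
    exact (add_lt_add_iff_left _).2 (hφ ⟨hr0, hrL⟩ ⟨by omega, hlt⟩ (lt_add_one r))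
  · have hnext : L * k + r + 1 = L * (k + 1) + 0 := by rw [← heq]; ring
    rw [hnext, blockSeq_mul_add hL hr0 hrL, blockSeq_mul_add hL le_rfl hL,
      show r = L - 1 by omega]
    linarith

lemma mem_range_blockSeq (hL : 0 < L) {n : ℤ} :
    n ∈ range (blockSeq L p φ) ↔ ∃ r ∈ Ico 0 L, n ≡ φ r [ZMOD p] := by
  constructor
  · rintro ⟨t, rfl⟩
    obtain ⟨k, r, hr0, hrL, rfl⟩ := exists_eq_mul_add hL t
    rw [blockSeq_mul_add hL hr0 hrL]
    exact ⟨r, ⟨hr0, hrL⟩, (Int.modEq_iff_add_fac.2 ⟨k, by ring⟩).symm⟩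
  · rintro ⟨r, ⟨hr0, hrL⟩, hn⟩
    obtain ⟨k, hk⟩ := Int.modEq_iff_add_fac.1 hn.symm
    exact ⟨L * k + r, by rw [blockSeq_mul_add hL hr0 hrL, hk]; ring⟩

end blockSeq

lemma StrictMono.eq_tail_of_range_eq {α : Type*} [Preorder α] {f : ℤ → α} {a : ℕ → α}
    (hf : StrictMono f) (ha : StrictMono a) {c : ℤ}
    (h : range a = {n | f c ≤ n} ∩ range f) (y : ℕ) : a y = f (c + y) := by
  have htail : StrictMono fun y : ℕ => f (c + y) :=
    hf.comp fun _ _ hlt => (add_lt_add_iff_left c).2 (Int.ofNat_lt.2 hlt)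
  have hrange : range a = range fun y : ℕ => f (c + y) := by
    rw [h]
    ext n
    constructor
    · rintro ⟨hcn, t, rfl⟩
      have hct : c ≤ t := hf.le_iff_le.1 hcn
      refine ⟨(t - c).toNat, show f (c + ((t - c).toNat : ℤ)) = f t from ?_⟩
      rw [Int.toNat_of_nonneg (by omega), add_sub_cancel]
    · rintro ⟨y, rfl⟩
      exact ⟨hf.monotone (by omega), _, rfl⟩
  exact congrFun ((ha.range_inj htail).1 hrange) y

lemma not_modEq_iff_exists_modEq_add {p c n : ℤ} (hp : 0 < p) :
    ¬ n ≡ c [ZMOD p] ↔ ∃ r ∈ Ico 0 (p - 1), n ≡ c + 1 + r [ZMOD p] := by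
  constructor
  · intro hnc
    have hne : (n - c) % p ≠ 0 := fun h0 =>
      hnc (Int.modEq_iff_dvd.2 (Int.dvd_of_emod_eq_zero h0)).symm
    have := Int.emod_nonneg (n - c) hp.ne'
    have := Int.emod_lt_of_pos (n - c) hp
    refine ⟨(n - c) % p - 1, ⟨by omega, by omega⟩, ?_⟩
    have hmod : c + (n - c) % p ≡ n [ZMOD p] := by
      simpa using (Int.mod_modEq (n - c) p).add_left c
    rw [show c + 1 + ((n - c) % p - 1) = c + (n - c) % p by ring]
    exact hmod.symm
  · rintro ⟨r, ⟨hr0, hrp⟩, hn⟩ hnc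
    have hdvd : p ∣ 1 + r := by simpa [add_assoc] using Int.ModEq.dvd (hnc.symm.trans hn)
    have := Int.eq_zero_of_dvd_of_nonneg_of_lt (by omega) (by omega) hdvd
    omega

lemma inS1_iff_not_modEq {p H x n : ℤ} (hc0 : 0 ≤ H - x % H) (hcp : H - x % H < p) :
    inS1 p H x n ↔ ¬ n ≡ H - x % H [ZMOD p] := by
  have hp : 0 < p := by omega
  have hn0 := Int.emod_nonneg n hp.ne'
  have hnp := Int.emod_lt_of_pos n hp
  show (0 ≤ n % p ∧ n % p ≤ p - 1 ∧ n % p ≠ H - x % H) ↔ _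
  rw [Int.ModEq, Int.emod_eq_of_lt hc0 hcp]
  exact ⟨fun h => h.2.2, fun h => ⟨hn0, by omega, h⟩⟩

/-- The residues in `S₂` in increasing order: `H - R, H, H + 1, …, p - 1`. -/
def residueS2 (H R r : ℤ) : ℤ := if r = 0 then H - R else H - 1 + r

lemma inS2_iff {p H x n : ℤ} (hR : 0 < x % H) (hRH : x % H < H) (hHp : H < p) :
    inS2 p H x n ↔ ∃ r ∈ Ico 0 (p - H + 1), n ≡ residueS2 H (x % H) r [ZMOD p] := by
  have hp : 0 < p := by omega
  have hn0 := Int.emod_nonneg n hp.ne'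
  have hnp := Int.emod_lt_of_pos n hp
  show (n % p = H - x % H ∨ (H ≤ n % p ∧ n % p ≤ p - 1)) ↔ _
  constructor
  · rintro (h | ⟨hl, hu⟩)
    · exact ⟨0, ⟨le_rfl, by omega⟩, by
        rw [Int.ModEq, residueS2, if_pos rfl, h,
          Int.emod_eq_of_lt (a := H - x % H) (by omega) (by omega)]⟩
    · exact ⟨n % p - H + 1, ⟨by omega, by omega⟩, by
        rw [Int.ModEq, residueS2, if_neg (by omega), show H - 1 + (n % p - H + 1) = n % p by ring,
          Int.emod_emod]⟩
  · rintro ⟨r, ⟨hr0, hrL⟩, hn⟩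
    rw [Int.ModEq, residueS2] at hn
    split_ifs at hn with hr
    · exact Or.inl (by rw [hn, Int.emod_eq_of_lt (by omega) (by omega)])
    · exact Or.inr (by rw [hn, Int.emod_eq_of_lt (by omega) (by omega)]; omega)

lemma blockSeq_residueS2_add {p H : ℤ} (hL : 0 < p - H + 1) (R t : ℤ) :
    blockSeq (p - H + 1) p (residueS2 H R) (p - H + 1 + t) =
      p + H - 1 + t + (H - R) * (t / (p - H + 1)) + (R - 1) * ((t - 1) / (p - H + 1)) := by
  generalize hLdef : p - H + 1 = L at hL ⊢
  obtain ⟨k, r, hr0, hrL, rfl⟩ := exists_eq_mul_add hL t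
  rw [show L + (L * k + r) = L * (k + 1) + r by ring, blockSeq_mul_add hL hr0 hrL,
    (mul_add_ediv_emod hL hr0 hrL).1]
  rcases hr0.eq_or_lt with rfl | hr
  · rw [show L * k + 0 - 1 = L * (k - 1) + (L - 1) by ring,
      (mul_add_ediv_emod hL (by omega) (by omega)).1, residueS2, if_pos rfl]
    linear_combination k * hLdef
  · rw [show L * k + r - 1 = L * k + (r - 1) by ring,
      (mul_add_ediv_emod hL (by omega) (by omega)).1, residueS2, if_neg hr.ne']
    linear_combination k * hLdef

lemma enumeration_S1_eq {p H x : ℤ} (hR : 0 < x % H) (hRH : x % H < H) (hHp : H < p)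
    {a : ℕ → ℤ} (ha : StrictMono a)
    (hra : ∀ n, (H ≤ n ∧ inS1 p H x n) ↔ ∃ y, a y = n)
    (y : ℕ) : a y = H + y + (x % H - 1 + y) / (p - 1) := by
  have hL : 0 < p - 1 := by omega
  have hmono : StrictMono (blockSeq (p - 1) p fun r => H - x % H + 1 + r) :=
    blockSeq_strictMono hL (fun r _ s _ hrs => by omega) (by omega)
  have hstart : blockSeq (p - 1) p (fun r => H - x % H + 1 + r) (x % H - 1) = H := by
    have := blockSeq_mul_add (p := p) (φ := fun r => H - x % H + 1 + r) hL
      (r := x % H - 1) (by omega) (by omega) 0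
    rw [mul_zero, zero_add, mul_zero, zero_add] at this
    rw [this]
    ring
  have hrange : range a = {n | blockSeq (p - 1) p (fun r => H - x % H + 1 + r) (x % H - 1) ≤ n}
      ∩ range (blockSeq (p - 1) p fun r => H - x % H + 1 + r) := by
    ext n
    rw [mem_range, ← hra, mem_inter_iff, mem_ofPred_eq, hstart, mem_range_blockSeq hL,
      inS1_iff_not_modEq (by omega) (by omega), not_modEq_iff_exists_modEq_add (by omega)]
  rw [hmono.eq_tail_of_range_eq ha hrange y, blockSeq, Int.emod_def (x % H - 1 + y)]
  ring

lemma enumeration_S2_eq {p H x : ℤ} (hR : 0 < x % H) (hRH : x % H < H) (hHp : H < p)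
    {b : ℕ → ℤ} (hb : StrictMono b)
    (hrb : ∀ n, (p + H - x % H ≤ n ∧ inS2 p H x n) ↔ ∃ y, b y = n) (y : ℕ) :
    b y = p + H - 1 + y + (H - x % H) * (y / (p - H + 1))
      + (x % H - 1) * ((y - 1) / (p - H + 1)) := by
  have hL : 0 < p - H + 1 := by omega
  have hmono : StrictMono (blockSeq (p - H + 1) p (residueS2 H (x % H))) := by
    refine blockSeq_strictMono hL (fun r hr s hs hrs => ?_) ?_
    · simp only [mem_Ico] at hr hs
      unfold residueS2
      split_ifs <;> omega
    · rw [residueS2, residueS2, if_neg (by omega), if_pos rfl]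
      omega
  have hstart : blockSeq (p - H + 1) p (residueS2 H (x % H)) (p - H + 1) = p + H - x % H := by
    have := blockSeq_mul_add (p := p) (φ := residueS2 H (x % H)) hL le_rfl hL 1
    rwa [mul_one, add_zero, mul_one, residueS2, if_pos rfl, ← add_sub_assoc] at this
  have hrange : range b = {n | blockSeq (p - H + 1) p (residueS2 H (x % H)) (p - H + 1) ≤ n}
      ∩ range (blockSeq (p - H + 1) p (residueS2 H (x % H))) := by
    ext n
    rw [mem_range, ← hrb, mem_inter_iff, mem_ofPred_eq, hstart, mem_range_blockSeq hL,
      inS2_iff hR hRH hHp]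
  rw [hmono.eq_tail_of_range_eq hb hrange y, blockSeq_residueS2_add hL]

theorem stmt17_general (p H x : ℤ) (hH : 1 < H) (hHp : H < p) (hnd : ¬ H ∣ x)
    (a b : ℕ → ℤ) (hma : StrictMono a) (hmb : StrictMono b)
    (hra : ∀ n : ℤ, ((H ≤ n ∧ inS1 p H x n) ↔ ∃ y, a y = n))
    (hrb : ∀ n : ℤ, ((p + H - x.emod H ≤ n ∧ inS2 p H x n) ↔ ∃ y, b y = n)) :
    (∀ y : ℕ, a y = H + y + ((x.emod H - 1 + y).fdiv (p - 1))) ∧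
    (∀ y : ℕ, b y = p + H - 1 + y + (H - x.emod H) * ((y : ℤ).fdiv (p - H + 1))
      + (x.emod H - 1) * (((y : ℤ) - 1).fdiv (p - H + 1))) := by
  have hR : 0 < x % H :=
    (Int.emod_nonneg x (by omega)).lt_of_ne fun h => hnd (Int.dvd_of_emod_eq_zero h.symm)
  have hRH : x % H < H := Int.emod_lt_of_pos x (by omega)
  refine ⟨fun y => ?_, fun y => ?_⟩
  · rw [Int.fdiv_eq_ediv_of_nonneg _ (by omega)]
    exact enumeration_S1_eq hR hRH hHp hma hra y
  · rw [Int.fdiv_eq_ediv_of_nonneg _ (by omega), Int.fdiv_eq_ediv_of_nonneg _ (by omega)]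
    exact enumeration_S2_eq hR hRH hHp hmb hrb y

/-- If `a₀ < a₁ < ⋯` enumerates `{n ≥ H : n mod p ∈ S₁}` and `b₀ < b₁ < ⋯` enumerates
`{n ≥ p + H - R : n mod p ∈ S₂}` then `a_y = H + y + ⌊(R - 1 + y)/(p - 1)⌋` and
`b_y = p + H - 1 + y + (H - R)·⌊y/(p - H + 1)⌋ + (R - 1)·⌊(y - 1)/(p - H + 1)⌋`. -/
theorem stmt17 (p H x : ℤ) (hH : 1 < H) (hHp : H < p) (hx : 0 < x) (hnd : ¬ H ∣ x)
    (a b : ℕ → ℤ) (hma : StrictMono a) (hmb : StrictMono b)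
    (hra : ∀ n : ℤ, ((H ≤ n ∧ inS1 p H x n) ↔ ∃ y, a y = n))
    (hrb : ∀ n : ℤ, ((p + H - x.emod H ≤ n ∧ inS2 p H x n) ↔ ∃ y, b y = n)) :
    (∀ y : ℕ, a y = H + y + ((x.emod H - 1 + y).fdiv (p - 1))) ∧
    (∀ y : ℕ, b y = p + H - 1 + y + (H - x.emod H) * ((y : ℤ).fdiv (p - H + 1))
      + (x.emod H - 1) * (((y : ℤ) - 1).fdiv (p - H + 1))) :=
  stmt17_general p H x hH hHp hnd a b hma hmb hra hrb
end

section
/- Let λ be a big partition, i.e. a completely splittable partition (λ₁ − λ_h + h ≤ p, h = h(λ)) with h > 1 and h_{1,1}(λ) = λ₁ + h − 1 ≥ p. Set j = λ₁ + h − p. Then 1 ≤ j ≤ λ₁, the transpose satisfies λᵗ_j = h, the hook length h_{1,j}(λ) equals exactly p, and the partition λ̃ = (λ_h − h + p + 1, λ₂, …, λ_{h−1}, λ₁ + h − p − 1) is obtained from λ by moving all nodes of the rim p-hook with base (1, j) from the last row to the first row. -/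
open scoped Classical

/-- Parts of the modified partition. -/
noncomputable def bigFun (p : ℕ) (l : Ptn) : ℕ → ℕ := fun t =>
  if t = 1 then l.part l.height + p + 1 - l.height
  else if t = l.height then l.part 1 + l.height - p - 1
  else if t < l.height then l.part t else 0

/-- For a big partition `λ` (completely splittable, `h(λ) > 1`, `h_{1,1}(λ) ≥ p`) and
`j = λ₁ + h - p`: `1 ≤ j ≤ λ₁`, `λᵗ_j = h`, the hook length `h_{1,j}(λ)` equals `p`, and
`λ̃ = (λ_h - h + p + 1, λ₂, …, λ_{h-1}, λ₁ + h - p - 1)` is the partition obtained from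
`λ` by moving the `λ_h - j + 1` nodes of the rim `p`-hook with base `(1, j)` lying in
the last row to the first row. -/

theorem stmt18 (p : ℕ) (hp : 0 < p) (l : Ptn)
    (hht : 1 < l.height)
    (hcs : l.part 1 + l.height ≤ p + l.part l.height)
    (hbig : p ≤ l.part 1 + l.height - 1) :
    1 ≤ l.part 1 + l.height - p ∧
    l.part 1 + l.height - p ≤ l.part 1 ∧
    Set.ncard {i : ℕ | 1 ≤ i ∧ l.part 1 + l.height - p ≤ l.part i} = l.height ∧
    l.part 1 + Set.ncard {i : ℕ | 1 ≤ i ∧ l.part 1 + l.height - p ≤ l.part i}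
      - (l.part 1 + l.height - p) = p ∧
    ∃ tl : Ptn,
      tl.part 1 = l.part l.height + p + 1 - l.height ∧
      (∀ t, 2 ≤ t → t < l.height → tl.part t = l.part t) ∧
      tl.part l.height = l.part 1 + l.height - p - 1 ∧
      (∀ t, l.height < t → tl.part t = 0) ∧
      tl.part 1 = l.part 1 + (l.part l.height + 1 - (l.part 1 + l.height - p)) ∧
      tl.part l.height = (l.part 1 + l.height - p) - 1 := by
  classical
  -- basic facts about the height
  have hS : {i : ℕ | 1 ≤ i ∧ l.part i ≠ 0}.Nonempty := by
    by_contra hne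
    rw [Set.not_nonempty_iff_eq_empty] at hne
    have : l.height = 0 := by
      unfold Ptn.height
      rw [hne, csSup_empty]
      rfl
    omega
  have hbdd : BddAbove {i : ℕ | 1 ≤ i ∧ l.part i ≠ 0} := by
    obtain ⟨N, hN⟩ := l.eventually_zero
    refine ⟨N, fun i hi => ?_⟩
    by_contra hcon
    push_neg at hcon
    exact hi.2 (hN i hcon.le)
  have hmem : l.height ∈ {i : ℕ | 1 ≤ i ∧ l.part i ≠ 0} := by
    have := Nat.sSup_mem hS hbdd
    exact this
  have hle : ∀ i, 1 ≤ i → l.part i ≠ 0 → i ≤ l.height :=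
    fun i h1 h2 => le_csSup hbdd ⟨h1, h2⟩
  have hzero : ∀ i, l.height < i → l.part i = 0 := by
    intro i hi
    by_contra hcon
    have := hle i (by omega) hcon
    omega
  have hb1 : 1 ≤ l.part l.height := Nat.one_le_iff_ne_zero.mpr hmem.2
  have hba : l.part l.height ≤ l.part 1 := l.antitone (le_refl 1) hmem.1
  have hhp : l.height ≤ p := by omega
  have hcard : Set.ncard {i : ℕ | 1 ≤ i ∧ l.part 1 + l.height - p ≤ l.part i}
      = l.height := by
    have hset : {i : ℕ | 1 ≤ i ∧ l.part 1 + l.height - p ≤ l.part i}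
        = ↑(Finset.Icc 1 l.height) := by
      ext i
      simp only [Set.mem_setOf_eq, Finset.coe_Icc, Set.mem_Icc]
      constructor
      · rintro ⟨h1, h2⟩
        refine ⟨h1, ?_⟩
        by_contra hcon
        push_neg at hcon
        have := hzero i hcon
        omega
      · rintro ⟨h1, h2⟩
        have := l.antitone h1 h2
        exact ⟨h1, by omega⟩
    rw [hset, Set.ncard_coe_finset, Nat.card_Icc]
    omega
  refine ⟨by omega, by omega, hcard, by rw [hcard]; omega, ?_⟩
  refine ⟨⟨bigFun p l, ?_, ⟨l.height + 1, fun i hi => ?_⟩⟩, ?_, ?_, ?_, ?_, ?_, ?_⟩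
  · -- antitone
    intro i j hi hij
    have hji : l.part j ≤ l.part i := l.antitone hi hij
    have hia : l.part i ≤ l.part 1 := l.antitone (le_refl 1) hi
    have hja : l.part j ≤ l.part 1 := l.antitone (le_refl 1) (le_trans hi hij)
    have hbi : l.height ≤ i ∨ l.part l.height ≤ l.part i := by
      rcases le_or_gt l.height i with h | h
      · exact Or.inl h
      · exact Or.inr (l.antitone hi h.le)
    have hbj : l.height ≤ j ∨ l.part l.height ≤ l.part j := by
      rcases le_or_gt l.height j with h | h
      · exact Or.inl h
      · exact Or.inr (l.antitone (le_trans hi hij) h.le)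
    have hzi : i ≤ l.height ∨ l.part i = 0 := by
      rcases le_or_gt i l.height with h | h
      · exact Or.inl h
      · exact Or.inr (hzero i h)
    have hzj : j ≤ l.height ∨ l.part j = 0 := by
      rcases le_or_gt j l.height with h | h
      · exact Or.inl h
      · exact Or.inr (hzero j h)
    unfold bigFun
    split_ifs <;> omega
  · simp only [bigFun]; split_ifs <;> omega
  · simp [bigFun]
  · intro t h2 hlt
    simp only [bigFun]; split_ifs <;> omega
  · simp only [bigFun]; split_ifs <;> omega
  · intro t ht
    simp only [bigFun]; split_ifs <;> omega
  · simp only [bigFun]; split_ifs <;> omega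
  · simp only [bigFun]; split_ifs <;> omega
end
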